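/- arXiv:2302.12363 — 7 statements merged into one kernel-verified Lean document; each statement's English description precedes it below -/
import Mathlib

section
/- Let κ ∈ (0,1] and let (a_n)_{n≥0}, (b_n)_{n≥0} be sequences of nonnegative real numbers with b_0 = 0 such that for all n ≥ 1: b_n ≤ (1/4)·a_{n−1} + (1−κ)·b_{n−1} and a_n ≥ (1/2)·a_{n−1} + κ·b_{n−1}. Then b_n ≤ a_0^*·a_n for all n ≥ 0, where a_0^* = (2+κ)/(2κ). -/
/-!
With `C = (2 + κ) / (2κ)` one has `C / 2 ≥ 1 / 4` and `C κ = 1 + κ / 2 ≥ 1 - κ`, so the bound on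
`b (n + 1)` is dominated termwise by `C` times the lower bound on `a (n + 1)`. No induction is
needed: each step only uses that `a n` and `b n` are nonnegative.
-/

section

variable {κ : ℝ}

lemma quarter_le_half_mul_div (hκ : 0 < κ) : 1 / 4 ≤ (2 + κ) / (2 * κ) * (1 / 2) := by
  rw [div_mul_eq_mul_div, le_div_iff₀ (by positivity)]
  linarith

lemma one_sub_le_mul_div (hκ : 0 < κ) : 1 - κ ≤ (2 + κ) / (2 * κ) * κ := by
  rw [div_mul_eq_mul_div, le_div_iff₀ (by positivity)]
  nlinarith

lemma le_mul_of_step_bounds (hκ : 0 < κ) {a b a' b' : ℝ} (ha : 0 ≤ a) (hb : 0 ≤ b)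
    (hb' : b' ≤ 1 / 4 * a + (1 - κ) * b) (ha' : 1 / 2 * a + κ * b ≤ a') :
    b' ≤ (2 + κ) / (2 * κ) * a' :=
  calc b' ≤ 1 / 4 * a + (1 - κ) * b := hb'
    _ ≤ (2 + κ) / (2 * κ) * (1 / 2) * a + (2 + κ) / (2 * κ) * κ * b := by
      gcongr
      · exact quarter_le_half_mul_div hκ
      · exact one_sub_le_mul_div hκ
    _ = (2 + κ) / (2 * κ) * (1 / 2 * a + κ * b) := by ring
    _ ≤ (2 + κ) / (2 * κ) * a' := by gcongr

end

theorem stmt1_general (κ : ℝ) (hκ0 : 0 < κ)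
    (a b : ℕ → ℝ) (ha : ∀ n, 0 ≤ a n) (hb : ∀ n, 0 ≤ b n) (hb0 : b 0 = 0)
    (hrec1 : ∀ n : ℕ, b (n + 1) ≤ (1 / 4) * a n + (1 - κ) * b n)
    (hrec2 : ∀ n : ℕ, a (n + 1) ≥ (1 / 2) * a n + κ * b n) :
    ∀ n : ℕ, b n ≤ ((2 + κ) / (2 * κ)) * a n := by
  rintro (_ | n)
  · rw [hb0]
    exact mul_nonneg (by positivity) (ha 0)
  · exact le_mul_of_step_bounds hκ0 (ha n) (hb n) (hrec1 n) (hrec2 n)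

/-- Corollary 2.5: if `b₀ = 0`, `b_n ≤ (1/4)a_{n-1} + (1-κ)b_{n-1}` and
`a_n ≥ (1/2)a_{n-1} + κ b_{n-1}` for all `n ≥ 1`, then
`b_n ≤ ((2+κ)/(2κ)) a_n` for all `n ≥ 0`. -/
theorem stmt1 (κ : ℝ) (hκ0 : 0 < κ) (hκ1 : κ ≤ 1)
    (a b : ℕ → ℝ) (ha : ∀ n, 0 ≤ a n) (hb : ∀ n, 0 ≤ b n) (hb0 : b 0 = 0)
    (hrec1 : ∀ n : ℕ, b (n + 1) ≤ (1 / 4) * a n + (1 - κ) * b n)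
    (hrec2 : ∀ n : ℕ, a (n + 1) ≥ (1 / 2) * a n + κ * b n) :
    ∀ n : ℕ, b n ≤ ((2 + κ) / (2 * κ)) * a n :=
  stmt1_general κ hκ0 a b ha hb hb0 hrec1 hrec2
end

section
/- Let (X, μ) be a finite measure space and let R : X → ℕ ∪ {∞} be measurable. Suppose there exist d₂ ≥ 1 and N ∈ ℕ such that μ({R ≥ n}) ≤ d₂ · Σ_{i=0}^{N} μ({R = n+i}) for all integers n ≥ 1. Then there exist C > 0 and γ ∈ (0,1) such that μ({R > n}) ≤ C·γ^n for all n ≥ 0. -/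
/-!
Splitting `{R ≥ n}` into the window `{n ≤ R ≤ n + N}` and the tail `{R > n + N}`, the hypothesis
says the window carries at least a `1/d₂` fraction of the mass, so
`μ(R > n + N) ≤ (1 - 1/d₂) μ(R ≥ n)`. The tails thus decay geometrically along blocks of
length `N + 1`, and monotonicity interpolates between the blocks.
-/

open MeasureTheory

section GeometricDecay

variable {u : ℕ → ℝ} {θ : ℝ} {k : ℕ}

theorem le_pow_mul_of_add_le_mul (hθ : 0 ≤ θ) (h : ∀ n, u (n + k) ≤ θ * u n) (q : ℕ) :
    u (k * q) ≤ θ ^ q * u 0 := by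
  induction q with
  | zero => simp
  | succ q ih =>
    calc u (k * (q + 1)) = u (k * q + k) := by rw [mul_add_one]
      _ ≤ θ * u (k * q) := h _
      _ ≤ θ * (θ ^ q * u 0) := mul_le_mul_of_nonneg_left ih hθ
      _ = θ ^ (q + 1) * u 0 := by ring

theorem exists_le_mul_pow_of_add_le_mul (hu : Antitone u) (hu₀ : ∀ n, 0 ≤ u n)
    (hθ : θ < 1) (hk : k ≠ 0) (h : ∀ n, u (n + k) ≤ θ * u n) :
    ∃ C > (0 : ℝ), ∃ γ ∈ Set.Ioo (0 : ℝ) 1, ∀ n, u n ≤ C * γ ^ n := by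
  set θ' := max θ (1 / 2)
  have hθ'₀ : 0 < θ' := lt_max_of_lt_right one_half_pos
  have hθ'₁ : θ' < 1 := max_lt hθ one_half_lt_one
  have h' : ∀ n, u (n + k) ≤ θ' * u n :=
    fun n => (h n).trans (mul_le_mul_of_nonneg_right (le_max_left _ _) (hu₀ n))
  set γ := θ' ^ ((k : ℝ)⁻¹)
  have hγ₀ : 0 < γ := Real.rpow_pos_of_pos hθ'₀ _
  have hγ₁ : γ < 1 := Real.rpow_lt_one hθ'₀.le hθ'₁ (by positivity)
  have hγk : γ ^ k = θ' := Real.rpow_inv_natCast_pow hθ'₀.le hk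
  refine ⟨u 0 / θ' + 1, by positivity [hu₀ 0], γ, ⟨hγ₀, hγ₁⟩, fun n => ?_⟩
  have hn : n < k * (n / k) + k := mul_comm k (n / k) ▸ Nat.lt_div_mul_add hk.bot_lt
  calc u n ≤ u (k * (n / k)) := hu (Nat.mul_div_le n k)
    _ ≤ θ' ^ (n / k) * u 0 := le_pow_mul_of_add_le_mul hθ'₀.le h' _
    _ = u 0 / θ' * γ ^ (k * (n / k) + k) := by
      rw [pow_add, pow_mul, hγk]; field_simp
    _ ≤ u 0 / θ' * γ ^ n :=
      mul_le_mul_of_nonneg_left (pow_le_pow_of_le_one hγ₀.le hγ₁.le hn.le)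
        (by positivity [hu₀ 0])
    _ ≤ (u 0 / θ' + 1) * γ ^ n := by gcongr; linarith

end GeometricDecay

theorem setOf_natCast_lt_eq {X : Type*} {R : X → ℕ∞} (n : ℕ) :
    {x | (n : ℕ∞) < R x} = {x | ((n + 1 : ℕ) : ℕ∞) ≤ R x} := by
  ext x
  simp only [Set.mem_ofPred_eq, Nat.cast_add, Nat.cast_one,
    ENat.add_one_le_iff (ENat.natCast_ne_top n)]

section Tails

variable {X : Type*} [MeasurableSpace X] {μ : Measure X} {R : X → ℕ∞}

theorem measure_natCast_le_eq_add (hR : Measurable R) (m : ℕ) :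
    μ {x | (m : ℕ∞) ≤ R x} = μ {x | R x = m} + μ {x | ((m + 1 : ℕ) : ℕ∞) ≤ R x} := by
  have hsplit : {x | (m : ℕ∞) ≤ R x} = {x | R x = m} ∪ {x | ((m + 1 : ℕ) : ℕ∞) ≤ R x} := by
    ext x
    simp only [Set.mem_union, Set.mem_ofPred_eq, Nat.cast_add, Nat.cast_one,
      ENat.add_one_le_iff (ENat.natCast_ne_top m), le_iff_eq_or_lt, eq_comm]
  have hmeas : MeasurableSet {x | ((m + 1 : ℕ) : ℕ∞) ≤ R x} :=
    hR (Set.to_countable (Set.Ici _)).measurableSet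
  refine hsplit ▸ measure_union (Set.disjoint_left.mpr ?_) hmeas
  intro x (hx : R x = m) (hx' : ((m + 1 : ℕ) : ℕ∞) ≤ R x)
  rw [hx, Nat.cast_le] at hx'
  omega

theorem measure_natCast_le_eq_sum_add (hR : Measurable R) (n N : ℕ) :
    μ {x | (n : ℕ∞) ≤ R x} =
      ∑ i ∈ Finset.range N, μ {x | R x = ((n + i : ℕ) : ℕ∞)} +
        μ {x | ((n + N : ℕ) : ℕ∞) ≤ R x} := by
  induction N with
  | zero => simp
  | succ N ih =>
    rw [ih, measure_natCast_le_eq_add hR (n + N), Finset.sum_range_succ, ← add_assoc,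
      add_assoc n N 1]

theorem measureReal_add_le_mul_of_le_mul_sum [IsFiniteMeasure μ] (hR : Measurable R) {d : ℝ}
    (hd : 0 < d) {n N : ℕ}
    (h : μ {x | (n : ℕ∞) ≤ R x} ≤
      ENNReal.ofReal d * ∑ i ∈ Finset.range N, μ {x | R x = ((n + i : ℕ) : ℕ∞)}) :
    μ.real {x | ((n + N : ℕ) : ℕ∞) ≤ R x} ≤ (1 - d⁻¹) * μ.real {x | (n : ℕ∞) ≤ R x} := by
  set window := ∑ i ∈ Finset.range N, μ {x | R x = ((n + i : ℕ) : ℕ∞)}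
  have hwindow : window ≠ ⊤ := ENNReal.sum_ne_top.mpr fun i _ => measure_ne_top μ _
  have hsplit : μ.real {x | (n : ℕ∞) ≤ R x} =
      window.toReal + μ.real {x | ((n + N : ℕ) : ℕ∞) ≤ R x} := by
    rw [measureReal_def, measure_natCast_le_eq_sum_add hR n N,
      ENNReal.toReal_add hwindow (measure_ne_top μ _), measureReal_def]
  have hdom : μ.real {x | (n : ℕ∞) ≤ R x} ≤ d * window.toReal := by
    rw [measureReal_def, ← ENNReal.toReal_ofReal hd.le, ← ENNReal.toReal_mul]
    exact ENNReal.toReal_mono (ENNReal.mul_ne_top ENNReal.ofReal_ne_top hwindow) h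
  have hfraction : d⁻¹ * μ.real {x | (n : ℕ∞) ≤ R x} ≤ window.toReal := by
    rw [inv_mul_le_iff₀ hd]; exact hdom
  linarith

end Tails

/-- Corollary 2.8: if `μ(R ≥ n)` is dominated, uniformly in `n ≥ 1`, by a fixed
multiple of `μ(n ≤ R ≤ n + N)`, then `R` has exponential tails. -/
theorem stmt2 {X : Type*} [MeasurableSpace X] (μ : Measure X) [IsFiniteMeasure μ]
    (R : X → ℕ∞) (hR : Measurable R)
    (d₂ : ℝ) (hd₂ : 1 ≤ d₂) (N : ℕ)
    (hyp : ∀ n : ℕ, 1 ≤ n →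
      μ {x | (n : ℕ∞) ≤ R x} ≤
        ENNReal.ofReal d₂ * ∑ i ∈ Finset.range (N + 1), μ {x | R x = ((n + i : ℕ) : ℕ∞)}) :
    ∃ C > (0 : ℝ), ∃ γ ∈ Set.Ioo (0 : ℝ) 1, ∀ n : ℕ,
      μ {x | (n : ℕ∞) < R x} ≤ ENNReal.ofReal (C * γ ^ n) := by
  have hd₂₀ : 0 < d₂ := one_pos.trans_le hd₂
  set u : ℕ → ℝ := fun n => μ.real {x | (n : ℕ∞) < R x}
  have hu : Antitone u := fun m n hmn =>
    measureReal_mono fun x (hx : (n : ℕ∞) < R x) => lt_of_le_of_lt (Nat.cast_le.mpr hmn) hx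
  have hcontract : ∀ n, u (n + (N + 1)) ≤ (1 - d₂⁻¹) * u n := by
    intro n
    have hn := measureReal_add_le_mul_of_le_mul_sum hR hd₂₀ (hyp (n + 1) n.succ_pos)
    simp only [u, setOf_natCast_lt_eq]
    rwa [add_right_comm n]
  obtain ⟨C, hC, γ, hγ, hdecay⟩ := exists_le_mul_pow_of_add_le_mul hu
    (fun n => measureReal_nonneg) (sub_lt_self 1 (inv_pos.mpr hd₂₀)) N.succ_ne_zero hcontract
  refine ⟨C, hC, γ, hγ, fun n => ?_⟩
  rw [← ofReal_measureReal]
  exact ENNReal.ofReal_le_ofReal (hdecay n)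
end

section
/- Fix m ≥ 1, α ∈ (0,1], E > 0, set Δ = 4π/E, let δ ∈ (0,Δ), let Y ⊂ ℝ^m be an open ball of diameter 1, and let μ be a Borel measure on Y whose density with respect to Lebesgue measure is bounded above and below by positive constants C⁺ and C⁻. Then for every K > 0 there exists c₁ > 0 such that the following holds for every real b with |b| ≥ 16π/E: whenever y₁', …, y_k' ∈ Y are points such that the open balls B((δ+Δ)/|b|, y_i') are pairwise disjoint, contained in Y, and maximal with these properties (i.e. every open ball B((δ+Δ)/|b|, z) contained in Y meets some B((δ+Δ)/|b|, y_i')), and whenever points y_i'' ∈ B(Δ/|b|, y_i') are chosen and B̂ = ⋃_{i=1}^k B(δ/(2|b|), y_i''), then every continuous function w : Y → (0,∞) satisfying |log w(x) − log w(y)| ≤ K·|b|^α·|x−y|^α for all x, y ∈ Y obeys ∫_{B̂} w dμ ≥ c₁ · ∫_Y w dμ. -/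
/-!
Let `ρ = (δ + Δ)/|b|`. Maximality of the disjoint family forces the tripled balls
`B(3ρ, y_i')` to cover `Y`, and each of them lies within distance `(3δ + 4Δ)/|b|` of `y_i''`.
On that scale the Hölder bound makes `w` comparable to `w(y_i'')` up to the factor
`exp (K (3δ + 4Δ)^α)`, independently of `b`. Comparing `μ` with Lebesgue measure then bounds
the integral over `B(3ρ, y_i') ∩ Y` by a fixed multiple of the integral over the small ball
`B(δ/(2|b|), y_i'')`, the volume ratio of the two balls being `(δ/(6(δ + Δ)))^m`. The small
balls sit inside the disjoint balls `B(ρ, y_i')`, so summing over `i` gives the claim.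
-/

open MeasureTheory Metric

section Covering

variable {E : Type*} [NormedAddCommGroup E] [NormedSpace ℝ E]

theorem exists_dist_lt_and_ball_subset_ball {c x : E} {R ρ : ℝ} (hx : x ∈ ball c R)
    (hρ : 0 < ρ) (hρR : ρ ≤ R) : ∃ z, dist x z < ρ ∧ ball z ρ ⊆ ball c R := by
  have hR : 0 < R := hρ.trans_le hρR
  have hxc : dist c x < R := by rw [dist_comm]; exact hx
  have hq : 0 ≤ 1 - ρ / R := sub_nonneg.2 ((div_le_one hR).2 hρR)
  refine ⟨AffineMap.homothety c (1 - ρ / R) x, ?_, ball_subset_ball' ?_⟩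
  · rw [dist_comm, dist_homothety_self, sub_sub_cancel, Real.norm_of_nonneg (by positivity)]
    calc ρ / R * dist c x < ρ / R * R := by gcongr
      _ = ρ := div_mul_cancel₀ ρ hR.ne'
  · rw [dist_homothety_center, Real.norm_of_nonneg hq]
    calc ρ + (1 - ρ / R) * dist c x ≤ ρ + (1 - ρ / R) * R := by gcongr
      _ = R := by field_simp; ring

theorem ball_subset_iUnion_ball_three_mul_of_maximal {ι : Type*} {c : E} {y : ι → E}
    {R ρ : ℝ} (hρ : 0 < ρ) (hρR : ρ ≤ R)
    (hmax : ∀ z, ball z ρ ⊆ ball c R → ∃ i, (ball z ρ ∩ ball (y i) ρ).Nonempty) :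
    ball c R ⊆ ⋃ i, ball (y i) (3 * ρ) := by
  intro x hx
  obtain ⟨z, hxz, hz⟩ := exists_dist_lt_and_ball_subset_ball hx hρ hρR
  obtain ⟨i, p, hpz, hpy⟩ := hmax z hz
  refine Set.mem_iUnion.2 ⟨i, ?_⟩
  calc dist x (y i) ≤ dist x z + dist z p + dist p (y i) := dist_triangle4 _ _ _ _
    _ < ρ + ρ + ρ := by
      gcongr
      exacts [(dist_comm z p).trans_lt hpz, hpy]
    _ = 3 * ρ := by ring

end Covering

section Configuration

variable {X : Type*} [PseudoMetricSpace X] {x y : X} {δ Δ t : ℝ}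

theorem ball_div_two_mul_subset_ball_add_div (hδ : 0 ≤ δ) (ht : 0 < t)
    (hxy : dist x y < Δ / t) : ball x (δ / (2 * t)) ⊆ ball y ((δ + Δ) / t) :=
  ball_subset_ball' <| calc
    δ / (2 * t) + dist x y ≤ δ / (2 * t) + Δ / t := by gcongr
    _ = (δ / 2 + Δ) / t := by ring
    _ ≤ (δ + Δ) / t := by gcongr; linarith

theorem ball_three_mul_union_ball_subset_ball (hδ : 0 ≤ δ) (ht : 0 < t)
    (hxy : dist x y < Δ / t) :
    ball y (3 * ((δ + Δ) / t)) ∪ ball x (δ / (2 * t)) ⊆ ball x ((3 * δ + 4 * Δ) / t) := by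
  have hΔ : 0 ≤ Δ := ((div_pos_iff_of_pos_right ht).1 (dist_nonneg.trans_lt hxy)).le
  refine Set.union_subset (ball_subset_ball' ?_) (ball_subset_ball ?_)
  · calc 3 * ((δ + Δ) / t) + dist y x ≤ 3 * ((δ + Δ) / t) + Δ / t := by
          rw [dist_comm]; gcongr
      _ = (3 * δ + 4 * Δ) / t := by ring
  · rw [← div_div]; gcongr; linarith

end Configuration

theorem mul_rpow_mul_rpow_le_of_lt_div {K t d D α : ℝ} (hK : 0 ≤ K) (ht : 0 < t) (hα : 0 ≤ α)
    (hd : 0 ≤ d) (h : d < D / t) : K * t ^ α * d ^ α ≤ K * D ^ α := by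
  rw [mul_assoc, ← Real.mul_rpow ht.le hd]
  gcongr
  exact ((lt_div_iff₀' ht).1 h).le

theorem ofReal_pow_finrank_mul_measure_le_addHaar_ball {E : Type*} [NormedAddCommGroup E]
    [NormedSpace ℝ E] [MeasurableSpace E] [BorelSpace E] [FiniteDimensional ℝ E]
    (μ : Measure E) [μ.IsAddHaarMeasure] {s : Set E} {x y : E} {θ r : ℝ} (hθ : 0 < θ)
    (hs : s ⊆ ball x r) :
    ENNReal.ofReal (θ ^ Module.finrank ℝ E) * μ s ≤ μ (ball y (θ * r)) := by
  rw [Measure.addHaar_ball_mul_of_pos μ y hθ, ← Measure.addHaar_ball_center μ x]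
  gcongr

theorem le_mul_exp_of_abs_log_sub_le {a b L : ℝ} (ha : 0 < a) (hb : 0 < b)
    (h : |Real.log a - Real.log b| ≤ L) : a ≤ b * Real.exp L := by
  calc a = Real.exp (Real.log a) := (Real.exp_log ha).symm
    _ ≤ Real.exp (Real.log b + L) := Real.exp_le_exp.2 (by linarith [(abs_le.1 h).2])
    _ = b * Real.exp L := by rw [Real.exp_add, Real.exp_log hb]

theorem mul_exp_neg_le_of_abs_log_sub_le {a b L : ℝ} (ha : 0 < a) (hb : 0 < b)
    (h : |Real.log a - Real.log b| ≤ L) : b * Real.exp (-L) ≤ a := by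
  have := le_mul_exp_of_abs_log_sub_le hb ha (L := L) (by rwa [abs_sub_comm])
  calc b * Real.exp (-L) ≤ a * Real.exp L * Real.exp (-L) := by gcongr
    _ = a := by rw [mul_assoc, ← Real.exp_add, add_neg_cancel, Real.exp_zero, mul_one]

section Comparison

variable {X : Type*} [MeasurableSpace X] {μ ν : Measure X}

theorem mul_setLIntegral_le_of_covering {ι : Type*} [Countable ι] {Y : Set X}
    {U B : ι → Set X} {f : X → ENNReal} {a : ENNReal} (hcover : Y ⊆ ⋃ i, U i)
    (hB : ∀ i, MeasurableSet (B i)) (hdisj : Pairwise (Function.onFun Disjoint B))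
    (hcmp : ∀ i, a * ∫⁻ x in U i ∩ Y, f x ∂μ ≤ ∫⁻ x in B i, f x ∂μ) :
    a * ∫⁻ x in Y, f x ∂μ ≤ ∫⁻ x in ⋃ i, B i, f x ∂μ := by
  have hY : Y ⊆ ⋃ i, U i ∩ Y := fun x hx => by
    obtain ⟨i, hi⟩ := Set.mem_iUnion.1 (hcover hx)
    exact Set.mem_iUnion.2 ⟨i, hi, hx⟩
  calc a * ∫⁻ x in Y, f x ∂μ ≤ a * ∑' i, ∫⁻ x in U i ∩ Y, f x ∂μ := by
        gcongr
        exact (lintegral_mono_set hY).trans (lintegral_iUnion_le _ _)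
    _ = ∑' i, a * ∫⁻ x in U i ∩ Y, f x ∂μ := ENNReal.tsum_mul_left.symm
    _ ≤ ∑' i, ∫⁻ x in B i, f x ∂μ := ENNReal.tsum_le_tsum hcmp
    _ = ∫⁻ x in ⋃ i, B i, f x ∂μ := (lintegral_iUnion hB hdisj _).symm

theorem ofReal_mul_setLIntegral_le_of_log_oscillation {Y s u : Set X} {Cplus Cminus : ℝ}
    (hCp : 0 < Cplus) (hCm : 0 ≤ Cminus)
    (hdens : ∀ s : Set X, MeasurableSet s → s ⊆ Y →
      ENNReal.ofReal Cminus * ν s ≤ μ s ∧ μ s ≤ ENNReal.ofReal Cplus * ν s)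
    (hs : MeasurableSet s) (hu : MeasurableSet u) (hsY : s ⊆ Y) (huY : u ⊆ Y)
    {w : X → ℝ} (hwpos : ∀ x ∈ Y, 0 < w x) {p : X} (hp : p ∈ Y) {M θ : ℝ} (hθ : 0 ≤ θ)
    (hosc : ∀ x ∈ s ∪ u, |Real.log (w x) - Real.log (w p)| ≤ M)
    (hvol : ENNReal.ofReal θ * ν s ≤ ν u) :
    ENNReal.ofReal (Real.exp (-(2 * M)) * (Cminus / Cplus) * θ) *
        ∫⁻ x in s, ENNReal.ofReal (w x) ∂μ ≤ ∫⁻ x in u, ENNReal.ofReal (w x) ∂μ := by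
  set W := w p
  have hW : 0 < W := hwpos p hp
  have hupper : ∫⁻ x in s, ENNReal.ofReal (w x) ∂μ ≤
      ENNReal.ofReal (W * Real.exp M) * (ENNReal.ofReal Cplus * ν s) :=
    calc _ ≤ ∫⁻ _ in s, ENNReal.ofReal (W * Real.exp M) ∂μ :=
          setLIntegral_mono' hs fun x hx => ENNReal.ofReal_le_ofReal <|
            le_mul_exp_of_abs_log_sub_le (hwpos x (hsY hx)) hW (hosc x (Or.inl hx))
      _ = ENNReal.ofReal (W * Real.exp M) * μ s := setLIntegral_const _ _
      _ ≤ _ := by gcongr; exact (hdens s hs hsY).2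
  have hlower : ENNReal.ofReal (W * Real.exp (-M)) * (ENNReal.ofReal Cminus * ν u) ≤
      ∫⁻ x in u, ENNReal.ofReal (w x) ∂μ :=
    calc _ ≤ ENNReal.ofReal (W * Real.exp (-M)) * μ u := by gcongr; exact (hdens u hu huY).1
      _ = ∫⁻ _ in u, ENNReal.ofReal (W * Real.exp (-M)) ∂μ := (setLIntegral_const _ _).symm
      _ ≤ _ := setLIntegral_mono' hu fun x hx => ENNReal.ofReal_le_ofReal <|
            mul_exp_neg_le_of_abs_log_sub_le (hwpos x (huY hx)) hW (hosc x (Or.inr hx))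
  have hconst : Real.exp (-(2 * M)) * (Cminus / Cplus) * θ * (W * Real.exp M) * Cplus =
      W * Real.exp (-M) * Cminus * θ := by
    have : Real.exp (-(2 * M)) * Real.exp M = Real.exp (-M) := by rw [← Real.exp_add]; ring_nf
    rw [← this]
    field_simp
  calc _ ≤ ENNReal.ofReal (Real.exp (-(2 * M)) * (Cminus / Cplus) * θ) *
        (ENNReal.ofReal (W * Real.exp M) * (ENNReal.ofReal Cplus * ν s)) := by gcongr
    _ = ENNReal.ofReal (W * Real.exp (-M)) *
          (ENNReal.ofReal Cminus * (ENNReal.ofReal θ * ν s)) := by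
      have h₁ : 0 ≤ Real.exp (-(2 * M)) * (Cminus / Cplus) * θ := by positivity
      have h₂ : 0 ≤ W * Real.exp (-M) := by positivity
      rw [← mul_assoc, ← mul_assoc, ← ENNReal.ofReal_mul h₁,
        ← ENNReal.ofReal_mul (by positivity), hconst, ← mul_assoc, ← mul_assoc,
        ← ENNReal.ofReal_mul h₂, ← ENNReal.ofReal_mul (by positivity)]
    _ ≤ _ := by gcongr
    _ ≤ _ := hlower

end Comparison

theorem stmt5_general {m : ℕ}
    (α : ℝ) (hα : α ∈ Set.Ioc (0 : ℝ) 1)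
    (E : ℝ) (hE : 0 < E)
    (δ : ℝ) (hδ : δ ∈ Set.Ioo (0 : ℝ) (4 * Real.pi / E))
    (c : EuclideanSpace ℝ (Fin m))
    (μ : Measure (EuclideanSpace ℝ (Fin m)))
    (Cplus Cminus : ℝ) (hCp : 0 < Cplus) (hCm : 0 < Cminus)
    (hdens : ∀ s : Set (EuclideanSpace ℝ (Fin m)), MeasurableSet s →
      s ⊆ Metric.ball c (1 / 2) →
      ENNReal.ofReal Cminus * volume s ≤ μ s ∧ μ s ≤ ENNReal.ofReal Cplus * volume s)
    (K : ℝ) (hK : 0 < K) :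
    ∃ c₁ > (0 : ℝ), ∀ b : ℝ, 16 * Real.pi / E ≤ |b| →
      ∀ (k : ℕ) (y' y'' : Fin k → EuclideanSpace ℝ (Fin m)),
      (∀ i, y' i ∈ Metric.ball c (1 / 2)) →
      (∀ i, Metric.ball (y' i) ((δ + 4 * Real.pi / E) / |b|) ⊆ Metric.ball c (1 / 2)) →
      (Pairwise fun i j => Disjoint (Metric.ball (y' i) ((δ + 4 * Real.pi / E) / |b|))
        (Metric.ball (y' j) ((δ + 4 * Real.pi / E) / |b|))) →
      (∀ z : EuclideanSpace ℝ (Fin m),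
        Metric.ball z ((δ + 4 * Real.pi / E) / |b|) ⊆ Metric.ball c (1 / 2) →
        ∃ i, (Metric.ball z ((δ + 4 * Real.pi / E) / |b|) ∩
          Metric.ball (y' i) ((δ + 4 * Real.pi / E) / |b|)).Nonempty) →
      (∀ i, y'' i ∈ Metric.ball (y' i) ((4 * Real.pi / E) / |b|)) →
      ∀ w : EuclideanSpace ℝ (Fin m) → ℝ,
      ContinuousOn w (Metric.ball c (1 / 2)) →
      (∀ x ∈ Metric.ball c (1 / 2), 0 < w x) →
      (∀ x ∈ Metric.ball c (1 / 2), ∀ y ∈ Metric.ball c (1 / 2),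
        |Real.log (w x) - Real.log (w y)| ≤ K * |b| ^ α * dist x y ^ α) →
      ENNReal.ofReal c₁ * ∫⁻ x in Metric.ball c (1 / 2), ENNReal.ofReal (w x) ∂μ ≤
        ∫⁻ x in ⋃ i, Metric.ball (y'' i) (δ / (2 * |b|)), ENNReal.ofReal (w x) ∂μ := by
  obtain ⟨hα0, -⟩ := hα
  obtain ⟨hδ0, hδΔ⟩ := hδ
  set Δ := 4 * Real.pi / E with hΔ
  set θ := δ / (6 * (δ + Δ)) with hθdef
  have hΔ0 : 0 < Δ := by positivity
  refine ⟨Real.exp (-(2 * (K * (3 * δ + 4 * Δ) ^ α))) * (Cminus / Cplus) * θ ^ m,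
    by positivity, ?_⟩
  intro b hb k y' y'' _ hsub hdisj hmax hy'' w _ hwpos hwlog
  set t := |b|
  have hΔt : 4 * Δ ≤ t := by linarith [show 4 * Δ = 16 * Real.pi / E by rw [hΔ]; ring]
  have ht : 0 < t := by linarith
  set ρ := (δ + Δ) / t with hρdef
  have hρ : ρ ≤ 1 / 2 := by rw [div_le_iff₀ ht]; linarith
  have hsmall i := ball_div_two_mul_subset_ball_add_div hδ0.le ht (hy'' i)
  refine mul_setLIntegral_le_of_covering
    (ball_subset_iUnion_ball_three_mul_of_maximal (by positivity) hρ hmax)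
    (fun _ => measurableSet_ball) (fun i j hij => (hdisj hij).mono (hsmall i) (hsmall j))
    fun i => ?_
  have hy''Y : y'' i ∈ ball c (1 / 2) := hsub i (hsmall i (mem_ball_self (by positivity)))
  have hr : δ / (2 * t) = θ * (3 * ρ) := by rw [hθdef, hρdef]; field_simp; ring
  have hvol := ofReal_pow_finrank_mul_measure_le_addHaar_ball volume (y := y'' i) (θ := θ)
    (by positivity) (Set.inter_subset_left : ball (y' i) (3 * ρ) ∩ ball c (1 / 2) ⊆ _)
  rw [finrank_euclideanSpace_fin, ← hr] at hvol
  refine ofReal_mul_setLIntegral_le_of_log_oscillation hCp hCm.le hdens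
    (measurableSet_ball.inter measurableSet_ball) measurableSet_ball Set.inter_subset_right
    ((hsmall i).trans (hsub i)) hwpos hy''Y (by positivity) (fun x hx => ?_) hvol
  refine (hwlog x ?_ _ hy''Y).trans (mul_rpow_mul_rpow_le_of_lt_div hK.le ht hα0.le
    dist_nonneg (ball_three_mul_union_ball_subset_ball hδ0.le ht (hy'' i)
      (Set.union_subset_union_left _ Set.inter_subset_left hx)))
  exact Set.union_subset Set.inter_subset_right ((hsmall i).trans (hsub i)) hx

/-- Proposition 3.7: for a measure `μ` on the open ball `Y` of diameter 1 with
density bounded above and below with respect to Lebesgue measure, and for any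
maximal family of disjoint balls `B((δ+Δ)/|b|, y_i') ⊆ Y` with perturbed
centres `y_i'' ∈ B(Δ/|b|, y_i')` and `B̂ = ⋃ B(δ/(2|b|), y_i'')`, one has
`∫_{B̂} w dμ ≥ c₁ ∫_Y w dμ` for every positive `w` with
`|log w|_α ≤ K|b|^α`, where `c₁ > 0` is uniform in `b`, the configuration
and `w`. Here `Δ = 4π/E`. -/
theorem stmt5 {m : ℕ} (hm : 1 ≤ m)
    (α : ℝ) (hα : α ∈ Set.Ioc (0 : ℝ) 1)
    (E : ℝ) (hE : 0 < E)
    (δ : ℝ) (hδ : δ ∈ Set.Ioo (0 : ℝ) (4 * Real.pi / E))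
    (c : EuclideanSpace ℝ (Fin m))
    (μ : Measure (EuclideanSpace ℝ (Fin m)))
    (Cplus Cminus : ℝ) (hCp : 0 < Cplus) (hCm : 0 < Cminus)
    (hdens : ∀ s : Set (EuclideanSpace ℝ (Fin m)), MeasurableSet s →
      s ⊆ Metric.ball c (1 / 2) →
      ENNReal.ofReal Cminus * volume s ≤ μ s ∧ μ s ≤ ENNReal.ofReal Cplus * volume s)
    (K : ℝ) (hK : 0 < K) :
    ∃ c₁ > (0 : ℝ), ∀ b : ℝ, 16 * Real.pi / E ≤ |b| →
      ∀ (k : ℕ) (y' y'' : Fin k → EuclideanSpace ℝ (Fin m)),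
      (∀ i, y' i ∈ Metric.ball c (1 / 2)) →
      (∀ i, Metric.ball (y' i) ((δ + 4 * Real.pi / E) / |b|) ⊆ Metric.ball c (1 / 2)) →
      (Pairwise fun i j => Disjoint (Metric.ball (y' i) ((δ + 4 * Real.pi / E) / |b|))
        (Metric.ball (y' j) ((δ + 4 * Real.pi / E) / |b|))) →
      (∀ z : EuclideanSpace ℝ (Fin m),
        Metric.ball z ((δ + 4 * Real.pi / E) / |b|) ⊆ Metric.ball c (1 / 2) →
        ∃ i, (Metric.ball z ((δ + 4 * Real.pi / E) / |b|) ∩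
          Metric.ball (y' i) ((δ + 4 * Real.pi / E) / |b|)).Nonempty) →
      (∀ i, y'' i ∈ Metric.ball (y' i) ((4 * Real.pi / E) / |b|)) →
      ∀ w : EuclideanSpace ℝ (Fin m) → ℝ,
      ContinuousOn w (Metric.ball c (1 / 2)) →
      (∀ x ∈ Metric.ball c (1 / 2), 0 < w x) →
      (∀ x ∈ Metric.ball c (1 / 2), ∀ y ∈ Metric.ball c (1 / 2),
        |Real.log (w x) - Real.log (w y)| ≤ K * |b| ^ α * dist x y ^ α) →
      ENNReal.ofReal c₁ * ∫⁻ x in Metric.ball c (1 / 2), ENNReal.ofReal (w x) ∂μ ≤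
        ∫⁻ x in ⋃ i, Metric.ball (y'' i) (δ / (2 * |b|)), ENNReal.ofReal (w x) ∂μ :=
  stmt5_general α hα E hE δ hδ c μ Cplus Cminus hCp hCm hdens K hK
end

section
/- Let m ≥ 1 and E > 0. Let ψ : ℝ^m → ℝ be C¹ and let ℓ : ℝ^m → ℝ^m be a C¹ vector field with |ℓ(x)| ≤ 1 and |Dψ(x)·ℓ(x)| ≥ E/2 for all x ∈ ℝ^m. Then for every real b ≠ 0, every y' ∈ ℝ^m and every θ₀ ∈ ℝ, there exists y'' ∈ ℝ^m with |y'' − y'| ≤ 4π/(E|b|) and an integer k ∈ ℤ such that b·(ψ(y'') − ψ(y')) = θ₀ + 2πk. -/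
/-!
Put `f = b (ψ - ψ y')`. At every point, a short step of length `h` in the direction `±ℓ` raises
`|f|` by at least `c' h` for any `c' < |b| E / 2`, since `|Df · ℓ| ≥ |b| E / 2`. A continuity
induction on the radius (the relevant set of radii is closed because closed balls are compact)
turns this into `|f| ≥ |b| E / 2 · R = 2π` somewhere on the ball of radius `R = 4π / (E |b|)`.
The image of that ball is an interval containing `0`, hence a full period of length `2π`.
-/

open Metric Set Filter Topology

section

variable {E : Type*} [NormedAddCommGroup E] [NormedSpace ℝ E]

theorem HasFDerivAt.eventually_add_mul_le {f : E → ℝ} {f' : E →L[ℝ] ℝ} {x v : E} {c : ℝ}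
    (hf : HasFDerivAt f f' x) (hc : c < f' v) :
    ∀ᶠ h in 𝓝[>] (0 : ℝ), f x + c * h ≤ f (x + h • v) := by
  have hline : HasDerivAt (fun h : ℝ => f (x + h • v)) (f' v) 0 := by
    have hx : HasDerivAt (fun h : ℝ => x + h • v) v 0 := by
      simpa using ((hasDerivAt_id (0 : ℝ)).smul_const v).const_add x
    exact (by simpa using hf : HasFDerivAt f f' (x + (0 : ℝ) • v)).comp_hasDerivAt 0 hx
  have hslope := (hline.tendsto_slope.mono_left (nhdsGT_le_nhdsNE 0)).eventually (lt_mem_nhds hc)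
  filter_upwards [hslope, self_mem_nhdsWithin] with h hlt (hpos : 0 < h)
  rw [slope_def_field, sub_zero, lt_div_iff₀ hpos] at hlt
  simp only [zero_smul, add_zero] at hlt
  linarith

theorem DifferentiableAt.exists_eventually_abs_add_mul_le {f : E → ℝ} {x w : E} {c : ℝ}
    (hf : DifferentiableAt ℝ f x) (hc : c < |fderiv ℝ f x w|) :
    ∃ v : E, ‖v‖ = ‖w‖ ∧ ∀ᶠ h in 𝓝[>] (0 : ℝ), |f x| + c * h ≤ |f (x + h • v)| := by
  obtain ⟨u, hu, hcu⟩ : ∃ u : E, ‖u‖ = ‖w‖ ∧ c < fderiv ℝ f x u := by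
    rcases lt_abs.mp hc with h | h
    · exact ⟨w, rfl, h⟩
    · exact ⟨-w, norm_neg w, by simpa using h⟩
  rcases le_or_gt 0 (f x) with hfx | hfx
  · refine ⟨u, hu, ?_⟩
    filter_upwards [hf.hasFDerivAt.eventually_add_mul_le hcu] with h hh
    rw [abs_of_nonneg hfx]
    exact hh.trans (le_abs_self _)
  · refine ⟨-u, by rw [norm_neg, hu], ?_⟩
    have hneg : c < (-fderiv ℝ f x) (-u) := by simpa using hcu
    filter_upwards [hf.hasFDerivAt.neg.eventually_add_mul_le hneg] with h hh
    rw [_root_.abs_of_neg hfx]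
    exact hh.trans (neg_le_abs _)

theorem exists_mem_closedBall_abs_add_mul_le [ProperSpace E] {f : E → ℝ} {c : ℝ}
    (hf : Continuous f)
    (hgrow : ∀ x, ∃ v : E, ‖v‖ ≤ 1 ∧ ∀ᶠ h in 𝓝[>] (0 : ℝ), |f x| + c * h ≤ |f (x + h • v)|)
    (y : E) {R : ℝ} (hR : 0 ≤ R) : ∃ x ∈ closedBall y R, |f y| + c * R ≤ |f x| := by
  set s : Set ℝ := {t | ∃ x ∈ closedBall y t, |f y| + c * t ≤ |f x|}
  suffices Icc 0 R ⊆ s from this ⟨hR, le_rfl⟩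
  refine IsClosed.Icc_subset_of_forall_exists_gt ?_ ⟨y, mem_closedBall_self le_rfl, by simp⟩ ?_
  · set K : Set (ℝ × E) := {p | p.1 ∈ Icc 0 R ∧ dist p.2 y ≤ p.1 ∧ |f y| + c * p.1 ≤ |f p.2|}
    have hK : IsCompact K := by
      refine ((isCompact_Icc (a := 0) (b := R)).prod (isCompact_closedBall y R)).of_isClosed_subset
        ?_ ?_
      · refine (isClosed_Icc.preimage continuous_fst).and ((isClosed_le ?_ ?_).and
          (isClosed_le ?_ ?_)) <;> fun_prop
      · rintro ⟨t, x⟩ ⟨ht, hx, -⟩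
        exact ⟨ht, hx.trans ht.2⟩
    have hsK : s ∩ Icc 0 R = Prod.fst '' K := by
      ext t
      constructor
      · rintro ⟨⟨x, hx, hfx⟩, ht⟩
        exact ⟨(t, x), ⟨ht, hx, hfx⟩, rfl⟩
      · rintro ⟨⟨t, x⟩, ⟨ht, hx, hfx⟩, rfl⟩
        exact ⟨⟨x, hx, hfx⟩, ht⟩
    rw [hsK]
    exact (hK.image continuous_fst).isClosed
  · rintro t ⟨⟨x, hx, hfx⟩, -⟩ u (htu : t < u)
    obtain ⟨v, hv, hgrow_x⟩ := hgrow x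
    obtain ⟨h, hh, hhu⟩ := (hgrow_x.and (Ioc_mem_nhdsGT (sub_pos.mpr htu))).exists
    refine ⟨t + h, ⟨x + h • v, ?_, ?_⟩, by linarith [hhu.1], by linarith [hhu.2]⟩
    · calc dist (x + h • v) y ≤ dist (x + h • v) x + dist x y := dist_triangle _ _ _
        _ ≤ h + t := by
          gcongr
          · rw [dist_self_add_left, norm_smul, Real.norm_of_nonneg hhu.1.le]
            exact mul_le_of_le_one_right hhu.1.le hv
          · exact hx
        _ = t + h := add_comm h t
    · linarith

theorem exists_mem_closedBall_abs_add_mul_le_of_fderiv [ProperSpace E] {f : E → ℝ} {c : ℝ}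
    (hf : Differentiable ℝ f) (hdir : ∀ x, ∃ w : E, ‖w‖ ≤ 1 ∧ c ≤ |fderiv ℝ f x w|)
    (y : E) {R : ℝ} (hR : 0 ≤ R) : ∃ x ∈ closedBall y R, |f y| + c * R ≤ |f x| := by
  obtain ⟨z, hz, hmax⟩ := (isCompact_closedBall y R).exists_isMaxOn (nonempty_closedBall.2 hR)
    (continuous_abs.comp hf.continuous).continuousOn
  refine ⟨z, hz, ?_⟩
  have hbelow : ∀ c' < c, |f y| + c' * R ≤ |f z| := by
    intro c' hc'
    have hgrow (x : E) :
        ∃ v : E, ‖v‖ ≤ 1 ∧ ∀ᶠ h in 𝓝[>] (0 : ℝ), |f x| + c' * h ≤ |f (x + h • v)| := by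
      obtain ⟨w, hw, hcw⟩ := hdir x
      obtain ⟨v, hv, hev⟩ := (hf x).exists_eventually_abs_add_mul_le (hc'.trans_le hcw)
      exact ⟨v, hv ▸ hw, hev⟩
    obtain ⟨x, hx, hle⟩ := exists_mem_closedBall_abs_add_mul_le hf.continuous hgrow y hR
    exact hle.trans (hmax hx)
  have hlim : Tendsto (fun c' => |f y| + c' * R) (𝓝[<] c) (𝓝 (|f y| + c * R)) :=
    ((continuous_const.add (continuous_id.mul continuous_const)).tendsto c).mono_left
      nhdsWithin_le_nhds
  exact le_of_tendsto hlim (eventually_nhdsWithin_of_forall hbelow)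

end

theorem IsPreconnected.exists_mem_eq_add_int_mul {X : Type*} [TopologicalSpace X] {S : Set X}
    {f : X → ℝ} (hS : IsPreconnected S) (hf : ContinuousOn f S) {x y : X} (hx : x ∈ S)
    (hy : y ∈ S) {p : ℝ} (hp : 0 < p) (hxy : p ≤ |f x - f y|) (θ : ℝ) :
    ∃ z ∈ S, ∃ k : ℤ, f z = θ + p * k := by
  have hI : uIcc (f y) (f x) ⊆ f '' S :=
    (hS.image f hf).ordConnected.uIcc_subset (mem_image_of_mem f hy) (mem_image_of_mem f hx)
  set a := min (f y) (f x)
  have hIco : Ico a (a + p) ⊆ uIcc (f y) (f x) := by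
    refine Ico_subset_Icc_self.trans (Icc_subset_Icc_right ?_)
    rw [abs_sub_comm, ← max_sub_min_eq_abs'] at hxy
    linarith
  obtain ⟨z, hz, hfz⟩ := hI (hIco (toIcoMod_mem_Ico hp a θ))
  refine ⟨z, hz, -toIcoDiv hp a θ, ?_⟩
  rw [hfz, ← self_sub_toIcoDiv_zsmul, zsmul_eq_mul]
  push_cast
  ring

theorem stmt6_general {m : ℕ} (E : ℝ) (hE : 0 < E)
    (ψ : EuclideanSpace ℝ (Fin m) → ℝ) (hψ : ContDiff ℝ 1 ψ)
    (ℓ : EuclideanSpace ℝ (Fin m) → EuclideanSpace ℝ (Fin m))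
    (hℓ1 : ∀ x, ‖ℓ x‖ ≤ 1)
    (hUNI : ∀ x, E / 2 ≤ |fderiv ℝ ψ x (ℓ x)|) :
    ∀ b : ℝ, b ≠ 0 → ∀ y' : EuclideanSpace ℝ (Fin m), ∀ θ₀ : ℝ,
      ∃ y'' : EuclideanSpace ℝ (Fin m), ‖y'' - y'‖ ≤ 4 * Real.pi / (E * |b|) ∧
        ∃ k : ℤ, b * (ψ y'' - ψ y') = θ₀ + 2 * Real.pi * k := by
  intro b hb y' θ₀
  set G : EuclideanSpace ℝ (Fin m) → ℝ := fun y => b * (ψ y - ψ y')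
  have hψ' : Differentiable ℝ ψ := hψ.differentiable one_ne_zero
  have hG : Differentiable ℝ G := (hψ'.sub_const _).const_mul b
  have hdir (x : EuclideanSpace ℝ (Fin m)) :
      ∃ w, ‖w‖ ≤ 1 ∧ |b| * (E / 2) ≤ |fderiv ℝ G x w| := by
    refine ⟨ℓ x, hℓ1 x, ?_⟩
    rw [fderiv_const_mul ((hψ' x).sub_const _), fderiv_sub_const]
    simpa [abs_mul] using mul_le_mul_of_nonneg_left (hUNI x) (abs_nonneg b)
  have hR : 0 ≤ 4 * Real.pi / (E * |b|) := by positivity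
  obtain ⟨z, hz, hGz⟩ := exists_mem_closedBall_abs_add_mul_le_of_fderiv hG hdir y' hR
  have hsweep : 2 * Real.pi ≤ |G z - G y'| := by
    have hb' : 0 < |b| := abs_pos.mpr hb
    convert hGz using 1 <;> simp [G]
    field_simp
    ring
  obtain ⟨y'', hy'', k, hk⟩ := (convex_closedBall y' _).isPreconnected.exists_mem_eq_add_int_mul
    hG.continuous.continuousOn hz (mem_closedBall_self hR) Real.two_pi_pos hsweep θ₀
  exact ⟨y'', mem_closedBall_iff_norm.1 hy'', k, hk⟩

/-- Step (3) of the Cancellation Lemma: flowing along a unit vector field `ℓ`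
on which `|Dψ·ℓ| ≥ E/2`, the quantity `b(ψ(y'') - ψ(y'))` hits any prescribed
value modulo `2π` for some `y''` with `|y'' - y'| ≤ 4π/(E|b|)`. -/
theorem stmt6 {m : ℕ} (hm : 1 ≤ m) (E : ℝ) (hE : 0 < E)
    (ψ : EuclideanSpace ℝ (Fin m) → ℝ) (hψ : ContDiff ℝ 1 ψ)
    (ℓ : EuclideanSpace ℝ (Fin m) → EuclideanSpace ℝ (Fin m)) (hℓ : ContDiff ℝ 1 ℓ)
    (hℓ1 : ∀ x, ‖ℓ x‖ ≤ 1)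
    (hUNI : ∀ x, E / 2 ≤ |fderiv ℝ ψ x (ℓ x)|) :
    ∀ b : ℝ, b ≠ 0 → ∀ y' : EuclideanSpace ℝ (Fin m), ∀ θ₀ : ℝ,
      ∃ y'' : EuclideanSpace ℝ (Fin m), ‖y'' - y'‖ ≤ 4 * Real.pi / (E * |b|) ∧
        ∃ k : ℤ, b * (ψ y'' - ψ y') = θ₀ + 2 * Real.pi * k :=
  stmt6_general E hE ψ hψ ℓ hℓ1 hUNI
end

section
/- Let Y ⊆ ℝ^m be open and convex, α ∈ (0,1], C₁ ≥ 1, ρ₀ ∈ (0,1), and let h₁, …, h_n : Y → Y be C¹ maps such that for each 1 ≤ i ≤ n the composition h_i ∘ h_{i+1} ∘ ⋯ ∘ h_n satisfies sup_{y∈Y} ‖D(h_i ∘ ⋯ ∘ h_n)(y)‖ ≤ C₁·ρ₀^{n−i+1}, and each h_i satisfies |log|det Dh_i||_α ≤ C₁. Then the composition h = h₁ ∘ ⋯ ∘ h_n satisfies |log|det Dh||_α ≤ C₁²/(1 − ρ₀^α). -/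
/-!
Each inverse branch satisfies a Hölder bound on `log |det Dh_i|`, and the chain rule writes
`log |det Dh|` as the sum over `i` of `log |det Dh_i|` evaluated along the tail
`h_{i+1} ∘ ⋯ ∘ h_n`. Since that tail contracts by `C₁ ρ₀^{n-i}`, the `i`-th summand varies by
at most `C₁ (C₁ ρ₀^{n-i} |x - y|)^α`, and these errors form a geometric series in `ρ₀^α`.

Because `log 0 = 0` in Mathlib, vanishing Jacobians need separate care: the Hölder bound keeps
`log |det Dh_i|` locally bounded, so on the connected set `Y` the determinant of a branch
vanishes either nowhere or everywhere; in the latter case both sides of the claim are trivial.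
-/

open Finset Filter Topology Real

/-- `compSeq h i k = h i ∘ h (i+1) ∘ ⋯ ∘ h (i+k-1)` (and the identity for `k = 0`). -/
def compSeq {E : Type*} (h : ℕ → E → E) : ℕ → ℕ → E → E
  | _, 0 => id
  | i, (k + 1) => h i ∘ compSeq h (i + 1) k

theorem IsPreconnected.forall_eq_zero_or_forall_ne_zero_of_log_abs_holder {X : Type*}
    [PseudoMetricSpace X] {Y : Set X} (hY : IsPreconnected Y) {g : X → ℝ}
    (hg : ContinuousOn g Y) {C α : ℝ} (hα : 0 ≤ α)
    (hd : ∀ x ∈ Y, ∀ y ∈ Y, |log (abs (g x)) - log (abs (g y))| ≤ C * dist x y ^ α) :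
    (∀ x ∈ Y, g x = 0) ∨ ∀ x ∈ Y, g x ≠ 0 := by
  have hlocal : ∀ x ∈ Y, ∀ᶠ y in 𝓝[Y] x, (g x = 0 ↔ g y = 0) := by
    intro x hx
    by_cases hx0 : g x = 0
    · have hsmall : ∀ᶠ y in 𝓝[Y] x, |g y| < exp (-|C|) := by
        have : Tendsto (fun y => |g y|) (𝓝[Y] x) (𝓝 0) := by
          simpa [hx0] using (hg x hx).tendsto.abs
        exact this.eventually_lt_const (exp_pos _)
      have hnear : ∀ᶠ y in 𝓝[Y] x, dist y x < 1 :=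
        nhdsWithin_le_nhds (Metric.ball_mem_nhds x one_pos)
      filter_upwards [hsmall, hnear, self_mem_nhdsWithin] with y hy_small hy_near hyY
      simp only [hx0, true_iff]
      by_contra hy0
      have hlog : |log (abs (g y))| ≤ |C| := by
        have hdist : dist x y ^ α ≤ 1 :=
          rpow_le_one dist_nonneg (by rw [dist_comm]; exact hy_near.le) hα
        calc |log (abs (g y))| = |log (abs (g x)) - log (abs (g y))| := by simp [hx0]
          _ ≤ C * dist x y ^ α := hd x hx y hyY
          _ ≤ |C| * dist x y ^ α := by gcongr; exact le_abs_self C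
          _ ≤ |C| := mul_le_of_le_one_right (abs_nonneg C) hdist
      have : exp (-|C|) ≤ |g y| :=
        (le_log_iff_exp_le (abs_pos.2 hy0)).1 (neg_le_of_abs_le hlog)
      exact hy_small.not_ge this
    · filter_upwards [(hg x hx).eventually_ne hx0] with y hy
      simp [hx0, hy]
  have hiff : ∀ x ∈ Y, ∀ y ∈ Y, (g x = 0 ↔ g y = 0) := fun x hx y hy =>
    hY.induction₂ _ hlocal (fun _ _ _ _ _ _ => Iff.trans) (fun _ _ _ _ => Iff.symm) hx hy
  by_cases hzero : ∃ z ∈ Y, g z = 0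
  · obtain ⟨z, hz, hz0⟩ := hzero
    exact Or.inl fun x hx => (hiff z hz x hx).1 hz0
  · exact Or.inr fun x hx hx0 => hzero ⟨x, hx, hx0⟩

theorem sum_pow_sub_succ_le_inv_one_sub {r : ℝ} (hr₀ : 0 ≤ r) (hr₁ : r < 1) (n : ℕ) :
    ∑ j ∈ range n, r ^ (n - (j + 1)) ≤ (1 - r)⁻¹ := by
  calc ∑ j ∈ range n, r ^ (n - (j + 1)) = ∑ j ∈ range n, r ^ (n - 1 - j) :=
        sum_congr rfl fun j _ => by rw [Nat.sub_sub, add_comm]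
    _ = ∑ j ∈ range n, r ^ j := sum_range_reflect (r ^ ·) n
    _ ≤ r ^ 0 / (1 - r) := by
        rw [range_eq_Ico]; exact geom_sum_Ico_le_of_lt_one hr₀ hr₁
    _ = (1 - r)⁻¹ := by rw [pow_zero, one_div]

theorem sum_mul_rpow_geometric_le {C ρ α d : ℝ} (hC : 1 ≤ C) (hρ₀ : 0 ≤ ρ) (hρ₁ : ρ < 1)
    (hα₀ : 0 < α) (hα₁ : α ≤ 1) (hd : 0 ≤ d) (n : ℕ) :
    ∑ j ∈ range n, C * (C * ρ ^ (n - (j + 1)) * d) ^ α ≤ C ^ 2 / (1 - ρ ^ α) * d ^ α := by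
  have hρα₀ : 0 ≤ ρ ^ α := rpow_nonneg hρ₀ α
  have hρα₁ : ρ ^ α < 1 := rpow_lt_one hρ₀ hρ₁ hα₀
  have hterm : ∀ k : ℕ, C * (C * ρ ^ k * d) ^ α = C * C ^ α * d ^ α * (ρ ^ α) ^ k := fun k => by
    rw [mul_rpow (by positivity) hd, mul_rpow (by positivity) (by positivity),
      ← rpow_pow_comm hρ₀]
    ring
  have hCα : C ^ α ≤ C := rpow_le_self_of_one_le hC hα₁
  calc ∑ j ∈ range n, C * (C * ρ ^ (n - (j + 1)) * d) ^ α
      = C * C ^ α * d ^ α * ∑ j ∈ range n, (ρ ^ α) ^ (n - (j + 1)) := by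
        simp only [hterm, mul_sum]
    _ ≤ C * C ^ α * d ^ α * (1 - ρ ^ α)⁻¹ := by
        gcongr; exact sum_pow_sub_succ_le_inv_one_sub hρα₀ hρα₁ n
    _ ≤ C * C * d ^ α * (1 - ρ ^ α)⁻¹ := by
        have : 0 < 1 - ρ ^ α := sub_pos.2 hρα₁
        gcongr
    _ = C ^ 2 / (1 - ρ ^ α) * d ^ α := by ring

section CompSeq

variable {E : Type*} {h : ℕ → E → E} {Y : Set E} {n : ℕ}

theorem compSeq_sub_eq_comp {i : ℕ} (hi : i < n) :
    compSeq h i (n - i) = h i ∘ compSeq h (i + 1) (n - (i + 1)) := by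
  rw [show n - i = n - (i + 1) + 1 by omega, compSeq]

theorem compSeq_sub_self (x : E) : compSeq h n (n - n) x = x := by
  rw [Nat.sub_self]; rfl

theorem mapsTo_compSeq_sub (hmaps : ∀ j < n, Set.MapsTo (h j) Y Y) {i : ℕ} (hi : i ≤ n) :
    Set.MapsTo (compSeq h i (n - i)) Y Y := by
  induction hi using Nat.decreasingInduction with
  | self => rw [Nat.sub_self]; exact Set.mapsTo_id Y
  | of_succ i hi ih => rw [compSeq_sub_eq_comp hi]; exact (hmaps i hi).comp ih

variable [NormedAddCommGroup E] [NormedSpace ℝ E]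

theorem differentiableOn_compSeq_sub (hmaps : ∀ j < n, Set.MapsTo (h j) Y Y)
    (hdiff : ∀ j < n, DifferentiableOn ℝ (h j) Y) {i : ℕ} (hi : i ≤ n) :
    DifferentiableOn ℝ (compSeq h i (n - i)) Y := by
  induction hi using Nat.decreasingInduction with
  | self => rw [Nat.sub_self]; exact differentiableOn_id
  | of_succ i hi ih =>
    rw [compSeq_sub_eq_comp hi]
    exact (hdiff i hi).comp ih (mapsTo_compSeq_sub hmaps hi)

theorem det_fderivWithin_compSeq_sub (hY : UniqueDiffOn ℝ Y)
    (hmaps : ∀ j < n, Set.MapsTo (h j) Y Y) (hdiff : ∀ j < n, DifferentiableOn ℝ (h j) Y)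
    {i : ℕ} (hi : i ≤ n) {x : E} (hx : x ∈ Y) :
    (fderivWithin ℝ (compSeq h i (n - i)) Y x).det =
      ∏ j ∈ Ico i n, (fderivWithin ℝ (h j) Y (compSeq h (j + 1) (n - (j + 1)) x)).det := by
  induction hi using Nat.decreasingInduction with
  | self =>
    rw [Nat.sub_self, Ico_self, prod_empty, compSeq, fderivWithin_id (hY x hx)]
    exact LinearMap.det_id
  | of_succ i hi ih =>
    rw [compSeq_sub_eq_comp hi, prod_eq_prod_Ico_succ_bot hi, ← ih,
      fderivWithin_comp x ((hdiff i hi) _ (mapsTo_compSeq_sub hmaps hi hx))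
        (differentiableOn_compSeq_sub hmaps hdiff hi x hx) (mapsTo_compSeq_sub hmaps hi) (hY x hx)]
    exact LinearMap.det_comp _ _

theorem det_fderivWithin_compSeq_eq_zero (hY : UniqueDiffOn ℝ Y)
    (hmaps : ∀ j < n, Set.MapsTo (h j) Y Y) (hdiff : ∀ j < n, DifferentiableOn ℝ (h j) Y)
    {i : ℕ} (hi : i < n) (hvanish : ∀ z ∈ Y, (fderivWithin ℝ (h i) Y z).det = 0)
    {x : E} (hx : x ∈ Y) :
    (fderivWithin ℝ (compSeq h 0 n) Y x).det = 0 := by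
  have hprod := det_fderivWithin_compSeq_sub hY hmaps hdiff n.zero_le hx
  rw [Nat.sub_zero] at hprod
  rw [hprod]
  exact prod_eq_zero (mem_Ico.2 ⟨i.zero_le, hi⟩) (hvanish _ (mapsTo_compSeq_sub hmaps hi hx))

theorem log_abs_det_fderivWithin_compSeq (hY : UniqueDiffOn ℝ Y)
    (hmaps : ∀ j < n, Set.MapsTo (h j) Y Y) (hdiff : ∀ j < n, DifferentiableOn ℝ (h j) Y)
    (hdet : ∀ j < n, ∀ z ∈ Y, (fderivWithin ℝ (h j) Y z).det ≠ 0) {x : E} (hx : x ∈ Y) :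
    log (abs (fderivWithin ℝ (compSeq h 0 n) Y x).det) =
      ∑ j ∈ range n,
        log (abs (fderivWithin ℝ (h j) Y (compSeq h (j + 1) (n - (j + 1)) x)).det) := by
  have hprod := det_fderivWithin_compSeq_sub hY hmaps hdiff n.zero_le hx
  rw [Nat.sub_zero, ← range_eq_Ico] at hprod
  rw [hprod, abs_prod, log_prod]
  intro j hj
  have hj : j < n := mem_range.1 hj
  exact abs_ne_zero.2 (hdet j hj _ (mapsTo_compSeq_sub hmaps hj hx))

theorem dist_compSeq_sub_le (hYc : Convex ℝ Y) {C ρ : ℝ} (hC : 1 ≤ C)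
    (hmaps : ∀ j < n, Set.MapsTo (h j) Y Y) (hdiff : ∀ j < n, DifferentiableOn ℝ (h j) Y)
    (hcontract : ∀ i < n, ∀ y ∈ Y,
      ‖fderivWithin ℝ (compSeq h i (n - i)) Y y‖ ≤ C * ρ ^ (n - i))
    {i : ℕ} (hi : i ≤ n) {x y : E} (hx : x ∈ Y) (hy : y ∈ Y) :
    dist (compSeq h i (n - i) x) (compSeq h i (n - i) y) ≤ C * ρ ^ (n - i) * dist x y := by
  rcases hi.lt_or_eq with hi | rfl
  · rw [dist_eq_norm, dist_eq_norm]
    exact hYc.norm_image_sub_le_of_norm_fderivWithin_le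
      (differentiableOn_compSeq_sub hmaps hdiff hi.le) (hcontract i hi) hy hx
  · rw [compSeq_sub_self, compSeq_sub_self, Nat.sub_self, pow_zero, mul_one]
    exact le_mul_of_one_le_left dist_nonneg hC

theorem abs_log_abs_det_fderivWithin_compSeq_sub_le (hY : UniqueDiffOn ℝ Y)
    (hYc : Convex ℝ Y) {α C ρ : ℝ} (hα₀ : 0 < α) (hα₁ : α ≤ 1) (hC : 1 ≤ C) (hρ₀ : 0 ≤ ρ)
    (hρ₁ : ρ < 1)
    (hmaps : ∀ j < n, Set.MapsTo (h j) Y Y) (hdiff : ∀ j < n, DifferentiableOn ℝ (h j) Y)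
    (hcontract : ∀ i < n, ∀ y ∈ Y,
      ‖fderivWithin ℝ (compSeq h i (n - i)) Y y‖ ≤ C * ρ ^ (n - i))
    (hdist : ∀ i < n, ∀ x ∈ Y, ∀ y ∈ Y,
      |log (abs (fderivWithin ℝ (h i) Y x).det) - log (abs (fderivWithin ℝ (h i) Y y).det)| ≤
        C * dist x y ^ α)
    (hdet : ∀ j < n, ∀ z ∈ Y, (fderivWithin ℝ (h j) Y z).det ≠ 0)
    {x y : E} (hx : x ∈ Y) (hy : y ∈ Y) :
    |log (abs (fderivWithin ℝ (compSeq h 0 n) Y x).det) -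
        log (abs (fderivWithin ℝ (compSeq h 0 n) Y y).det)| ≤
      C ^ 2 / (1 - ρ ^ α) * dist x y ^ α := by
  rw [log_abs_det_fderivWithin_compSeq hY hmaps hdiff hdet hx,
    log_abs_det_fderivWithin_compSeq hY hmaps hdiff hdet hy, ← sum_sub_distrib]
  refine (abs_sum_le_sum_abs _ _).trans <| (sum_le_sum fun j hj => ?_).trans <|
    sum_mul_rpow_geometric_le hC hρ₀ hρ₁ hα₀ hα₁ dist_nonneg n
  have hj : j < n := mem_range.1 hj
  calc _ ≤ C * dist (compSeq h (j + 1) (n - (j + 1)) x)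
          (compSeq h (j + 1) (n - (j + 1)) y) ^ α :=
        hdist j hj _ (mapsTo_compSeq_sub hmaps hj hx) _ (mapsTo_compSeq_sub hmaps hj hy)
    _ ≤ C * (C * ρ ^ (n - (j + 1)) * dist x y) ^ α := by
        gcongr
        exact dist_compSeq_sub_le hYc hC hmaps hdiff hcontract hj hx hy

end CompSeq

/-- Branches are indexed by `0, …, n-1`, so `compSeq h i (n - i)` is `h_{i+1} ∘ ⋯ ∘ h_n` in
the paper's numbering. -/
theorem stmt9_general {m : ℕ} (Y : Set (EuclideanSpace ℝ (Fin m)))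
    (hYopen : IsOpen Y) (hYconv : Convex ℝ Y)
    (α : ℝ) (hα : α ∈ Set.Ioc (0 : ℝ) 1)
    (C₁ : ℝ) (hC₁ : 1 ≤ C₁)
    (ρ₀ : ℝ) (hρ₀ : ρ₀ ∈ Set.Ioo (0 : ℝ) 1)
    (n : ℕ)
    (h : ℕ → EuclideanSpace ℝ (Fin m) → EuclideanSpace ℝ (Fin m))
    (hmaps : ∀ i < n, Set.MapsTo (h i) Y Y)
    (hsmooth : ∀ i < n, ContDiffOn ℝ 1 (h i) Y)
    (hcontract : ∀ i < n, ∀ y ∈ Y,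
      ‖fderivWithin ℝ (compSeq h i (n - i)) Y y‖ ≤ C₁ * ρ₀ ^ (n - i))
    (hdist : ∀ i < n, ∀ x ∈ Y, ∀ y ∈ Y,
      |Real.log (abs (fderivWithin ℝ (h i) Y x).det) -
        Real.log (abs (fderivWithin ℝ (h i) Y y).det)| ≤ C₁ * dist x y ^ α) :
    ∀ x ∈ Y, ∀ y ∈ Y,
      |Real.log (abs (fderivWithin ℝ (compSeq h 0 n) Y x).det) -
        Real.log (abs (fderivWithin ℝ (compSeq h 0 n) Y y).det)| ≤
        (C₁ ^ 2 / (1 - ρ₀ ^ α)) * dist x y ^ α := by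
  intro x hx y hy
  have hY : UniqueDiffOn ℝ Y := hYopen.uniqueDiffOn
  have hdiff : ∀ i < n, DifferentiableOn ℝ (h i) Y := fun i hi =>
    (hsmooth i hi).differentiableOn one_ne_zero
  by_cases hsingular : ∃ i < n, ∃ z ∈ Y, (fderivWithin ℝ (h i) Y z).det = 0
  · obtain ⟨i, hi, z, hz, hz0⟩ := hsingular
    have hvanish : ∀ w ∈ Y, (fderivWithin ℝ (h i) Y w).det = 0 :=
      (hYconv.isPreconnected.forall_eq_zero_or_forall_ne_zero_of_log_abs_holder
        (ContinuousLinearMap.continuous_det.comp_continuousOn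
          ((hsmooth i hi).continuousOn_fderivWithin hY le_rfl))
        hα.1.le (hdist i hi)).resolve_right fun hne => hne z hz hz0
    rw [det_fderivWithin_compSeq_eq_zero hY hmaps hdiff hi hvanish hx,
      det_fderivWithin_compSeq_eq_zero hY hmaps hdiff hi hvanish hy, sub_self, abs_zero]
    have hgap : 0 < 1 - ρ₀ ^ α := sub_pos.2 (rpow_lt_one hρ₀.1.le hρ₀.2 hα.1)
    positivity
  · exact abs_log_abs_det_fderivWithin_compSeq_sub_le hY hYconv hα.1 hα.2 hC₁ hρ₀.1.le hρ₀.2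
      hmaps hdiff hcontract hdist
      (fun i hi z hz hz0 => hsingular ⟨i, hi, z, hz, hz0⟩) hx hy

/-- Condition (ii₁) of Section 3.1: if each composition `h_i ∘ ⋯ ∘ h_n`
contracts with rate `C₁ ρ₀^{n-i+1}` and each branch satisfies the distortion
bound `|log |det Dh_i||_α ≤ C₁`, then the full composition `h = h₁ ∘ ⋯ ∘ h_n`
satisfies `|log |det Dh||_α ≤ C₁²/(1 - ρ₀^α)`.  (Branches are indexed here by
`0, …, n-1`, so `compSeq h i (n-i)` is the composition of the last `n - i`
branches.) -/
theorem stmt9 {m : ℕ} (Y : Set (EuclideanSpace ℝ (Fin m)))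
    (hYopen : IsOpen Y) (hYconv : Convex ℝ Y)
    (α : ℝ) (hα : α ∈ Set.Ioc (0 : ℝ) 1)
    (C₁ : ℝ) (hC₁ : 1 ≤ C₁)
    (ρ₀ : ℝ) (hρ₀ : ρ₀ ∈ Set.Ioo (0 : ℝ) 1)
    (n : ℕ) (hn : 1 ≤ n)
    (h : ℕ → EuclideanSpace ℝ (Fin m) → EuclideanSpace ℝ (Fin m))
    (hmaps : ∀ i < n, Set.MapsTo (h i) Y Y)
    (hsmooth : ∀ i < n, ContDiffOn ℝ 1 (h i) Y)
    (hcontract : ∀ i < n, ∀ y ∈ Y,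
      ‖fderivWithin ℝ (compSeq h i (n - i)) Y y‖ ≤ C₁ * ρ₀ ^ (n - i))
    (hdist : ∀ i < n, ∀ x ∈ Y, ∀ y ∈ Y,
      |Real.log (abs (fderivWithin ℝ (h i) Y x).det) -
        Real.log (abs (fderivWithin ℝ (h i) Y y).det)| ≤ C₁ * dist x y ^ α) :
    ∀ x ∈ Y, ∀ y ∈ Y,
      |Real.log (abs (fderivWithin ℝ (compSeq h 0 n) Y x).det) -
        Real.log (abs (fderivWithin ℝ (compSeq h 0 n) Y y).det)| ≤
        (C₁ ^ 2 / (1 - ρ₀ ^ α)) * dist x y ^ α :=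
  stmt9_general Y hYopen hYconv α hα C₁ hC₁ ρ₀ hρ₀ n h hmaps hsmooth hcontract hdist
end

section
/- Let (Y, d) be a metric space, let 𝒫 be a collection of pairwise disjoint subsets of Y with union D = ⋃_{U∈𝒫} U, and let f : D → Y be a map. Let ξ : Y → ℝ be uniformly continuous, let ζ : D → ℝ be constant on each element of 𝒫, and define r : D → ℝ by r = ξ∘f − ξ + ζ. Let x, x' ∈ Y and let (z_j)_{j≥0}, (z_j')_{j≥0} be sequences with z₀ = x, z₀' = x', such that for every j ≥ 1: z_j, z_j' ∈ D, f(z_j) = z_{j−1}, f(z_j') = z_{j−1}', and z_j and z_j' lie in the same element of 𝒫. If d(z_j, z_j') → 0 as j → ∞, then the series Σ_{j=1}^{∞} (r(z_j) − r(z_j')) converges and equals ξ(x) − ξ(x'). -/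
/-! Since `ζ` takes the same value at `z_j` and `z_j'`, the `j`-th term equals
`c_{j-1} - c_j` with `c_j = ξ(z_j) - ξ(z_j')`, so the partial sums telescope to `c_0 - c_N`;
uniform continuity of `ξ` turns `d(z_N, z_N') → 0` into `c_N → 0`. -/

open Filter Topology Finset

theorem UniformContinuous.tendsto_sub_of_tendsto_dist {ι α E : Type*} [PseudoMetricSpace α]
    [SeminormedAddCommGroup E] {g : α → E} (hg : UniformContinuous g) {l : Filter ι}
    {u v : ι → α} (h : Tendsto (fun i => dist (u i) (v i)) l (𝓝 0)) :
    Tendsto (fun i => g (u i) - g (v i)) l (𝓝 0) := by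
  have hdist : Tendsto (fun i => dist (g (u i)) (g (v i))) l (𝓝 0) :=
    tendsto_uniformity_iff_dist_tendsto_zero.1
      (Tendsto.comp hg (tendsto_uniformity_iff_dist_tendsto_zero (f := fun i => (u i, v i)) |>.2 h))
  rw [tendsto_zero_iff_norm_tendsto_zero]
  simpa only [dist_eq_norm] using hdist

theorem tendsto_sum_range_sub_succ {E : Type*} [AddCommGroup E] [TopologicalSpace E]
    [ContinuousSub E] {c : ℕ → E} (hc : Tendsto c atTop (𝓝 0)) :
    Tendsto (fun N => ∑ j ∈ range N, (c j - c (j + 1))) atTop (𝓝 (c 0)) := by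
  simp_rw [sum_range_sub']
  simpa using tendsto_const_nhds.sub hc

theorem sub_eq_of_cohomologous_of_mem {Y : Type*} {P : Set (Set Y)}
    {f : Y → Y} {ξ ζ r : Y → ℝ} (hζ : ∀ U ∈ P, ∀ x ∈ U, ∀ y ∈ U, ζ x = ζ y)
    (hr : ∀ x ∈ ⋃ U ∈ P, U, r x = ξ (f x) - ξ x + ζ x)
    {U : Set Y} (hU : U ∈ P) {y y' : Y} (hy : y ∈ U) (hy' : y' ∈ U) :
    r y - r y' = (ξ (f y) - ξ (f y')) - (ξ y - ξ y') := by
  rw [hr y (Set.mem_biUnion hU hy), hr y' (Set.mem_biUnion hU hy'), hζ U hU y hy y' hy']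
  ring

theorem stmt11_general {Y : Type*} [MetricSpace Y] (P : Set (Set Y))
    (f : Y → Y) (ξ : Y → ℝ) (hξ : UniformContinuous ξ)
    (ζ : Y → ℝ) (hζ : ∀ U ∈ P, ∀ x ∈ U, ∀ y ∈ U, ζ x = ζ y)
    (r : Y → ℝ) (hr : ∀ x ∈ ⋃ U ∈ P, U, r x = ξ (f x) - ξ x + ζ x)
    (x x' : Y) (z z' : ℕ → Y) (hz0 : z 0 = x) (hz0' : z' 0 = x')
    (hstep : ∀ j : ℕ, f (z (j + 1)) = z j ∧ f (z' (j + 1)) = z' j ∧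
      ∃ U ∈ P, z (j + 1) ∈ U ∧ z' (j + 1) ∈ U)
    (hdist : Tendsto (fun j => dist (z j) (z' j)) atTop (nhds 0)) :
    Tendsto (fun N => ∑ j ∈ Finset.range N, (r (z (j + 1)) - r (z' (j + 1))))
      atTop (nhds (ξ x - ξ x')) := by
  have hterm : ∀ j, r (z (j + 1)) - r (z' (j + 1))
      = (ξ (z j) - ξ (z' j)) - (ξ (z (j + 1)) - ξ (z' (j + 1))) := by
    intro j
    obtain ⟨hfz, hfz', U, hU, hzU, hz'U⟩ := hstep j
    rw [sub_eq_of_cohomologous_of_mem hζ hr hU hzU hz'U, hfz, hfz']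
  simp_rw [hterm, ← hz0, ← hz0']
  exact tendsto_sum_range_sub_succ (hξ.tendsto_sub_of_tendsto_dist hdist)

/-- The telescoping argument in the proof of Lemma 4.4: if `r = ξ∘f - ξ + ζ`
on `D = ⋃ 𝒫` with `ξ` uniformly continuous and `ζ` constant on elements of the
pairwise disjoint collection `𝒫`, and if `(z_j), (z_j')` are backward orbits of
`x, x'` under `f` staying in common partition elements with `d(z_j, z_j') → 0`,
then `Σ_{j≥1} (r(z_j) - r(z_j'))` converges to `ξ(x) - ξ(x')`. -/
theorem stmt11 {Y : Type*} [MetricSpace Y] (P : Set (Set Y))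
    (hPdisj : P.Pairwise (Disjoint · ·))
    (f : Y → Y) (ξ : Y → ℝ) (hξ : UniformContinuous ξ)
    (ζ : Y → ℝ) (hζ : ∀ U ∈ P, ∀ x ∈ U, ∀ y ∈ U, ζ x = ζ y)
    (r : Y → ℝ) (hr : ∀ x ∈ ⋃ U ∈ P, U, r x = ξ (f x) - ξ x + ζ x)
    (x x' : Y) (z z' : ℕ → Y) (hz0 : z 0 = x) (hz0' : z' 0 = x')
    (hstep : ∀ j : ℕ, f (z (j + 1)) = z j ∧ f (z' (j + 1)) = z' j ∧
      ∃ U ∈ P, z (j + 1) ∈ U ∧ z' (j + 1) ∈ U)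
    (hdist : Tendsto (fun j => dist (z j) (z' j)) atTop (nhds 0)) :
    Tendsto (fun N => ∑ j ∈ Finset.range N, (r (z (j + 1)) - r (z' (j + 1))))
      atTop (nhds (ξ x - ξ x')) :=
  stmt11_general P f ξ hξ ζ hζ r hr x x' z z' hz0 hz0' hstep hdist
end

section
/- Let Y ⊂ ℝ^m be an open ball of diameter 1, α ∈ (0,1], C₁ ≥ 1, ρ₀ ∈ (0,1), r₀ > 0, ε₀ > 0. Let (h_i)_{i∈I} be a countable family of injective C¹ maps h_i : Y → Y with pairwise disjoint images such that: sup_{y} ‖Dh_i(y)‖ ≤ C₁ρ₀ for each i; |log|det Dh_i||_α ≤ C₁ for each i; and let (r_i)_{i∈I} be C¹ functions r_i : Y → ℝ with r_i ≥ r₀, sup_y ‖Dr_i(y)‖ ≤ C₁, and Σ_{i∈I} e^{ε₀·sup_Y r_i} · sup_Y |det Dh_i| < ∞. For s = σ + ib ∈ ℂ and bounded α-Hölder v : Y → ℂ define (P_s v)(y) = Σ_{i∈I} e^{−s·r_i(y)} |det Dh_i(y)| v(h_i(y)). Then there exist ε ∈ (0, ε₀] and C > 0, depending only on m, α, C₁,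 ρ₀, r₀, ε₀ and the value of the convergent sum, such that for every s = σ + ib with |σ| ≤ ε and every bounded α-Hölder v : Y → ℂ: the series defining P_s v converges absolutely and uniformly on Y, P_s v is bounded and α-Hölder, and ‖P_s v‖_b ≤ C·‖v‖_b. -/
/-!
Each term of `transferOp` is a weight `g_i = e^{-s r_i} |det Dh_i|` times `v ∘ h_i`. On a convex
set of diameter at most one, `g_i` is bounded by `M_i = e^{ε₀ sup r_i} sup |det Dh_i|` and is
`α`-Hölder with constant `M_i K (1 + |b|^α)` for a fixed `K`. For the Jacobian factor this is the
log-Hölder hypothesis, once connectedness has excluded a Jacobian vanishing somewhere but not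
everywhere; for `e^{-s r_i}` it is `|e^z - 1| ≤ (2 + e^{Re z}) |z|^α` with `|z| ≤ |s| C₁ |x - y|`
and `|s|^α ≤ (1 + ε₀) (1 + |b|^α)`. As `v ∘ h_i` is Hölder with the constant of `v` times
`(C₁ ρ₀)^α`, summing against the summable `M_i` gives uniform convergence and both bounds, with
`ε = ε₀`.
-/

open MeasureTheory Filter

/-- The (non-normalised) twisted transfer operator
`(P_s v)(y) = Σ_i e^{-s r_i(y)} |det Dh_i(y)| v(h_i(y))`,
where the Jacobians are computed as derivatives within `Y`. -/
noncomputable def transferOp {E : Type*} [NormedAddCommGroup E] [NormedSpace ℝ E]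
    {I : Type*} (Y : Set E) (h : I → E → E) (r : I → E → ℝ) (s : ℂ) (v : E → ℂ) :
    E → ℂ :=
  fun y => ∑' i, Complex.exp (-s * (r i y : ℂ)) *
    ((|(fderivWithin ℝ (h i) Y y).det| : ℝ) : ℂ) * v (h i y)

lemma Real.abs_exp_sub_one_le_abs_mul_exp (t : ℝ) : |Real.exp t - 1| ≤ |t| * Real.exp |t| := by
  have := Complex.norm_exp_sub_sum_le_norm_mul_exp (t : ℂ) 1
  simpa [← Complex.ofReal_exp, ← Complex.ofReal_one, ← Complex.ofReal_sub] using this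

lemma abs_sub_le_mul_of_abs_log_sub_le {a b L : ℝ} (ha : 0 < a) (hb : 0 < b)
    (h : |Real.log a - Real.log b| ≤ L) : |a - b| ≤ b * (L * Real.exp L) := by
  have hab : a - b = b * (Real.exp (Real.log a - Real.log b) - 1) := by
    rw [Real.exp_sub, Real.exp_log ha, Real.exp_log hb]; field_simp
  rw [hab, abs_mul, abs_of_pos hb]
  gcongr
  calc _ ≤ _ := Real.abs_exp_sub_one_le_abs_mul_exp _
    _ ≤ L * Real.exp L := by gcongr; exact (abs_nonneg _).trans h

lemma Complex.norm_exp_sub_one_le_rpow {α : ℝ} (hα0 : 0 < α) (hα1 : α ≤ 1) {z : ℂ} {c : ℝ}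
    (hz : z.re ≤ c) : ‖Complex.exp z - 1‖ ≤ (2 + Real.exp c) * ‖z‖ ^ α := by
  have hexp : 0 < Real.exp c := Real.exp_pos c
  rcases le_or_gt ‖z‖ 1 with hz1 | hz1
  · calc ‖Complex.exp z - 1‖ ≤ 2 * ‖z‖ := Complex.norm_exp_sub_one_le hz1
      _ ≤ 2 * ‖z‖ ^ α := by gcongr; exact Real.self_le_rpow_of_le_one (norm_nonneg z) hz1 hα1
      _ ≤ (2 + Real.exp c) * ‖z‖ ^ α := by gcongr; linarith
  · have h1 : 1 ≤ ‖z‖ ^ α := Real.one_le_rpow hz1.le hα0.le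
    calc ‖Complex.exp z - 1‖ ≤ Real.exp c + 1 := by
          refine (norm_sub_le _ _).trans ?_
          rw [Complex.norm_exp, norm_one]
          gcongr
      _ ≤ (2 + Real.exp c) * ‖z‖ ^ α := by nlinarith

lemma Complex.norm_rpow_le_mul_one_add {α : ℝ} (hα0 : 0 ≤ α) (hα1 : α ≤ 1) (s : ℂ) :
    ‖s‖ ^ α ≤ (1 + |s.re|) * (1 + |s.im| ^ α) := by
  have h1 : |s.re| ^ α ≤ 1 + |s.re| := by
    rcases le_or_gt |s.re| 1 with h | h
    · linarith [Real.rpow_le_one (abs_nonneg s.re) h hα0, abs_nonneg s.re]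
    · linarith [Real.rpow_le_self_of_one_le h.le hα1]
  have h2 : 0 ≤ |s.im| ^ α := by positivity
  calc ‖s‖ ^ α ≤ (|s.re| + |s.im|) ^ α := by gcongr; exact Complex.norm_le_abs_re_add_abs_im s
    _ ≤ |s.re| ^ α + |s.im| ^ α := Real.rpow_add_le_add_rpow (abs_nonneg _) (abs_nonneg _) hα0 hα1
    _ ≤ (1 + |s.re|) * (1 + |s.im| ^ α) := by nlinarith [abs_nonneg s.re]

lemma Complex.norm_exp_neg_mul_ofReal_le {s : ℂ} {ε t R : ℝ} (hs : |s.re| ≤ ε) (ht : 0 ≤ t)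
    (htR : t ≤ R) : ‖Complex.exp (-s * t)‖ ≤ Real.exp (ε * R) := by
  rw [Complex.norm_exp, Real.exp_le_exp]
  have hre : (-s * t).re = -s.re * t := by simp
  rw [hre]
  calc -s.re * t ≤ ε * t := by gcongr; exact (neg_le_abs _).trans hs
    _ ≤ ε * R := by gcongr; exact (abs_nonneg _).trans hs

lemma Complex.norm_exp_neg_mul_sub_le {α : ℝ} (hα0 : 0 < α) (hα1 : α ≤ 1) (s : ℂ) (a b : ℝ) :
    ‖Complex.exp (-s * a) - Complex.exp (-s * b)‖ ≤
      ‖Complex.exp (-s * b)‖ * ((2 + Real.exp (|s.re| * |a - b|)) * (‖s‖ * |a - b|) ^ α) := by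
  have hsplit : Complex.exp (-s * a) - Complex.exp (-s * b) =
      Complex.exp (-s * b) * (Complex.exp (-s * (a - b : ℝ)) - 1) := by
    rw [mul_sub, mul_one, ← Complex.exp_add]; push_cast; ring_nf
  have hre : (-s * (a - b : ℝ)).re ≤ |s.re| * |a - b| := by
    simpa [abs_mul] using neg_le_abs (s.re * (a - b))
  rw [hsplit, norm_mul]
  gcongr
  have := Complex.norm_exp_sub_one_le_rpow hα0 hα1 hre
  rwa [norm_mul, norm_neg, Complex.norm_real, Real.norm_eq_abs] at this

lemma Complex.norm_exp_neg_mul_sub_le_of_abs_sub_le {α C ε : ℝ} (hα0 : 0 < α) (hα1 : α ≤ 1)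
    {s : ℂ} (hs : |s.re| ≤ ε) (hC : 0 ≤ C) {a b d : ℝ} (hab : |a - b| ≤ C * d) (hd0 : 0 ≤ d)
    (hd1 : d ≤ 1) :
    ‖Complex.exp (-s * a) - Complex.exp (-s * b)‖ ≤ ‖Complex.exp (-s * b)‖ *
      ((2 + Real.exp (ε * C)) * (1 + ε) * C ^ α * (1 + |s.im| ^ α) * d ^ α) := by
  have hε : 0 ≤ ε := (abs_nonneg _).trans hs
  have habC : |a - b| ≤ C := hab.trans (mul_le_of_le_one_right hC hd1)
  have hsab : (‖s‖ * |a - b|) ^ α ≤ (1 + ε) * (1 + |s.im| ^ α) * (C ^ α * d ^ α) := by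
    rw [Real.mul_rpow (norm_nonneg _) (abs_nonneg _), ← Real.mul_rpow hC hd0]
    gcongr
    exact (Complex.norm_rpow_le_mul_one_add hα0.le hα1 s).trans (by gcongr)
  calc _ ≤ ‖Complex.exp (-s * b)‖ *
        ((2 + Real.exp (|s.re| * |a - b|)) * (‖s‖ * |a - b|) ^ α) :=
        Complex.norm_exp_neg_mul_sub_le hα0 hα1 s a b
    _ ≤ ‖Complex.exp (-s * b)‖ *
        ((2 + Real.exp (ε * C)) * ((1 + ε) * (1 + |s.im| ^ α) * (C ^ α * d ^ α))) := by
        gcongr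
    _ = _ := by ring

lemma le_cbiSup_of_mem {α β : Type*} [ConditionallyCompleteLattice α] {f : β → α} {s : Set β}
    (H : BddAbove (f '' s)) {c : β} (hc : c ∈ s) : f c ≤ ⨆ i ∈ s, f i :=
  le_ciSup₂ (f := fun i (_ : i ∈ s) => f i)
    (H.mono (Set.iUnion_subset fun _ => Set.range_subset_iff.2 fun hi => Set.mem_image_of_mem f hi))
    c hc

lemma dist_le_one_of_mem_ball_half {X : Type*} [PseudoMetricSpace X] {c x y : X}
    (hx : x ∈ Metric.ball c (1 / 2)) (hy : y ∈ Metric.ball c (1 / 2)) : dist x y ≤ 1 := by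
  linarith [dist_triangle_right x y c, Metric.mem_ball.1 hx, Metric.mem_ball.1 hy]

lemma Convex.dist_image_le_of_norm_fderivWithin_le {E F : Type*} [NormedAddCommGroup E]
    [NormedSpace ℝ E] [NormedAddCommGroup F] [NormedSpace ℝ F] {Y : Set E} (hY : Convex ℝ Y)
    {f : E → F} (hf : DifferentiableOn ℝ f Y) {C : ℝ} (hC : ∀ y ∈ Y, ‖fderivWithin ℝ f Y y‖ ≤ C)
    {x y : E} (hx : x ∈ Y) (hy : y ∈ Y) : dist (f x) (f y) ≤ C * dist x y := by
  simpa only [dist_eq_norm] using hY.norm_image_sub_le_of_norm_fderivWithin_le hf hC hy hx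

lemma IsPreconnected.eq_zero_or_pos_of_abs_log_sub_le {X : Type*} [TopologicalSpace X] {Y : Set X}
    (hY : IsPreconnected Y) {f : X → ℝ} (hf : ContinuousOn f Y) (hf0 : ∀ y ∈ Y, 0 ≤ f y) {K : ℝ}
    (hK : ∀ x ∈ Y, ∀ y ∈ Y, |Real.log (f x) - Real.log (f y)| ≤ K) :
    (∀ y ∈ Y, f y = 0) ∨ ∀ y ∈ Y, 0 < f y := by
  by_contra! ⟨⟨z, hz, hfz⟩, ⟨w, hw, hfw⟩⟩
  have hfw0 : f w = 0 := le_antisymm hfw (hf0 w hw)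
  have hfz0 : 0 < f z := (hf0 z hz).lt_of_ne' hfz
  -- As `log 0 = 0`, comparing with the zero `w` gives `|log (f y)| ≤ K`: `f` skips the interval
  -- `(0, exp (-K))`, which connectedness forbids.
  have hgap : ∀ y ∈ Y, 0 < f y → Real.exp (-K) ≤ f y := fun y hy hpos => by
    have := hK y hy w hw
    rw [hfw0, Real.log_zero, sub_zero] at this
    rw [← Real.exp_log hpos]
    exact Real.exp_le_exp.2 (neg_le_of_abs_le this)
  set t := min (f z) (Real.exp (-K)) / 2 with ht_def
  have ht : 0 < t := by positivity
  obtain ⟨u, hu, hfu⟩ : t ∈ f '' Y :=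
    (hY.image f hf).Icc_subset ⟨w, hw, hfw0⟩ ⟨z, hz, rfl⟩ ⟨ht.le, by
      rw [ht_def]; linarith [min_le_left (f z) (Real.exp (-K))]⟩
  have := hgap u hu (hfu ▸ ht)
  rw [hfu, ht_def] at this
  linarith [min_le_right (f z) (Real.exp (-K)), Real.exp_pos (-K)]

lemma IsPreconnected.abs_sub_le_of_abs_log_sub_le {X : Type*} [PseudoMetricSpace X] {Y : Set X}
    (hY : IsPreconnected Y) {f : X → ℝ} (hf : ContinuousOn f Y) (hf0 : ∀ y ∈ Y, 0 ≤ f y)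
    {α K : ℝ} (hK : 0 ≤ K) (hdiam : ∀ x ∈ Y, ∀ y ∈ Y, dist x y ^ α ≤ 1)
    (hlog : ∀ x ∈ Y, ∀ y ∈ Y, |Real.log (f x) - Real.log (f y)| ≤ K * dist x y ^ α) :
    ∀ x ∈ Y, ∀ y ∈ Y, |f x - f y| ≤ f y * (K * Real.exp K) * dist x y ^ α := by
  have hlogK : ∀ x ∈ Y, ∀ y ∈ Y, |Real.log (f x) - Real.log (f y)| ≤ K := fun x hx y hy =>
    (hlog x hx y hy).trans (mul_le_of_le_one_right hK (hdiam x hx y hy))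
  intro x hx y hy
  rcases hY.eq_zero_or_pos_of_abs_log_sub_le hf hf0 hlogK with hzero | hpos
  · simp [hzero x hx, hzero y hy]
  · calc |f x - f y| ≤ f y * (K * dist x y ^ α * Real.exp (K * dist x y ^ α)) :=
          abs_sub_le_mul_of_abs_log_sub_le (hpos x hx) (hpos y hy) (hlog x hx y hy)
      _ ≤ f y * (K * dist x y ^ α * Real.exp K) := by
          gcongr
          · exact (hpos y hy).le
          · exact mul_le_of_le_one_right hK (hdiam x hx y hy)
      _ = f y * (K * Real.exp K) * dist x y ^ α := by ring

section WeightedSum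

variable {X I : Type*} {Y : Set X} {g : I → X → ℂ} {h : I → X → X}
  {v : X → ℂ} {M : I → ℝ} {V : ℝ}

lemma norm_mul_comp_le (hmaps : ∀ i, Set.MapsTo (h i) Y Y) (hg : ∀ i, ∀ y ∈ Y, ‖g i y‖ ≤ M i)
    (hv : ∀ y ∈ Y, ‖v y‖ ≤ V) (i : I) {y : X} (hy : y ∈ Y) : ‖g i y * v (h i y)‖ ≤ M i * V := by
  rw [norm_mul]
  exact mul_le_mul (hg i y hy) (hv _ (hmaps i hy)) (norm_nonneg _)
    ((norm_nonneg _).trans (hg i y hy))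

lemma norm_mul_comp_sub_le [PseudoMetricSpace X] {α K L W : ℝ} (hmaps : ∀ i, Set.MapsTo (h i) Y Y)
    (hg : ∀ i, ∀ y ∈ Y, ‖g i y‖ ≤ M i)
    (hgH : ∀ i, ∀ x ∈ Y, ∀ y ∈ Y, ‖g i x - g i y‖ ≤ M i * K * dist x y ^ α)
    (hα : 0 ≤ α) (hL : 0 ≤ L) (hh : ∀ i, ∀ x ∈ Y, ∀ y ∈ Y, dist (h i x) (h i y) ≤ L * dist x y)
    (hv : ∀ y ∈ Y, ‖v y‖ ≤ V) (hvH : ∀ x ∈ Y, ∀ y ∈ Y, ‖v x - v y‖ ≤ W * dist x y ^ α)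
    (hW : 0 ≤ W) (i : I) {x y : X} (hx : x ∈ Y) (hy : y ∈ Y) :
    ‖g i x * v (h i x) - g i y * v (h i y)‖ ≤ M i * (K * V + W * L ^ α) * dist x y ^ α := by
  have hsplit : g i x * v (h i x) - g i y * v (h i y) =
      g i x * (v (h i x) - v (h i y)) + (g i x - g i y) * v (h i y) := by ring
  have hvhH : ‖v (h i x) - v (h i y)‖ ≤ W * L ^ α * dist x y ^ α := by
    calc _ ≤ W * dist (h i x) (h i y) ^ α := hvH _ (hmaps i hx) _ (hmaps i hy)
      _ ≤ W * (L * dist x y) ^ α := by gcongr; exact hh i x hx y hy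
      _ = _ := by rw [Real.mul_rpow hL dist_nonneg, mul_assoc]
  rw [hsplit]
  calc _ ≤ ‖g i x‖ * ‖v (h i x) - v (h i y)‖ + ‖g i x - g i y‖ * ‖v (h i y)‖ := by
        rw [← norm_mul, ← norm_mul]; exact norm_add_le _ _
    _ ≤ M i * (W * L ^ α * dist x y ^ α) + M i * K * dist x y ^ α * V := by
        have hgx := hg i x hx
        have hgxy := hgH i x hx y hy
        exact add_le_add
          (mul_le_mul hgx hvhH (norm_nonneg _) ((norm_nonneg _).trans hgx))
          (mul_le_mul hgxy (hv _ (hmaps i hy)) (norm_nonneg _) ((norm_nonneg _).trans hgxy))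
    _ = _ := by ring

lemma summable_norm_mul_comp (hM : Summable M) (hmaps : ∀ i, Set.MapsTo (h i) Y Y)
    (hg : ∀ i, ∀ y ∈ Y, ‖g i y‖ ≤ M i) (hv : ∀ y ∈ Y, ‖v y‖ ≤ V) {y : X} (hy : y ∈ Y) :
    Summable fun i => ‖g i y * v (h i y)‖ :=
  (hM.mul_right V).of_nonneg_of_le (fun _ => norm_nonneg _)
    fun i => norm_mul_comp_le hmaps hg hv i hy

lemma tendstoUniformlyOn_tsum_mul_comp (hM : Summable M) (hmaps : ∀ i, Set.MapsTo (h i) Y Y)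
    (hg : ∀ i, ∀ y ∈ Y, ‖g i y‖ ≤ M i) (hv : ∀ y ∈ Y, ‖v y‖ ≤ V) :
    TendstoUniformlyOn (fun t y => ∑ i ∈ t, g i y * v (h i y))
      (fun y => ∑' i, g i y * v (h i y)) atTop Y :=
  tendstoUniformlyOn_tsum (hM.mul_right V) fun i _ hy => norm_mul_comp_le hmaps hg hv i hy

lemma norm_tsum_mul_comp_le (hM : Summable M) (hmaps : ∀ i, Set.MapsTo (h i) Y Y)
    (hg : ∀ i, ∀ y ∈ Y, ‖g i y‖ ≤ M i) (hv : ∀ y ∈ Y, ‖v y‖ ≤ V) {y : X} (hy : y ∈ Y) :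
    ‖∑' i, g i y * v (h i y)‖ ≤ (∑' i, M i) * V :=
  tsum_of_norm_bounded (hM.hasSum.mul_right V) fun i => norm_mul_comp_le hmaps hg hv i hy

lemma norm_tsum_mul_comp_sub_le [PseudoMetricSpace X] {α K L W : ℝ} (hM : Summable M)
    (hmaps : ∀ i, Set.MapsTo (h i) Y Y) (hg : ∀ i, ∀ y ∈ Y, ‖g i y‖ ≤ M i)
    (hgH : ∀ i, ∀ x ∈ Y, ∀ y ∈ Y, ‖g i x - g i y‖ ≤ M i * K * dist x y ^ α)
    (hα : 0 ≤ α) (hL : 0 ≤ L) (hh : ∀ i, ∀ x ∈ Y, ∀ y ∈ Y, dist (h i x) (h i y) ≤ L * dist x y)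
    (hv : ∀ y ∈ Y, ‖v y‖ ≤ V) (hvH : ∀ x ∈ Y, ∀ y ∈ Y, ‖v x - v y‖ ≤ W * dist x y ^ α)
    (hW : 0 ≤ W) {x y : X} (hx : x ∈ Y) (hy : y ∈ Y) :
    ‖∑' i, g i x * v (h i x) - ∑' i, g i y * v (h i y)‖ ≤
      (∑' i, M i) * (K * V + W * L ^ α) * dist x y ^ α := by
  rw [← ((summable_norm_mul_comp hM hmaps hg hv hx).of_norm).tsum_sub
    (summable_norm_mul_comp hM hmaps hg hv hy).of_norm, mul_assoc]
  refine tsum_of_norm_bounded (hM.hasSum.mul_right _) fun i => ?_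
  rw [← mul_assoc]
  exact norm_mul_comp_sub_le hmaps hg hgH hα hL hh hv hvH hW i hx hy

end WeightedSum

noncomputable def twistedWeight {E : Type*} [NormedAddCommGroup E] [NormedSpace ℝ E]
    (Y : Set E) (h : E → E) (r : E → ℝ) (s : ℂ) (y : E) : ℂ :=
  Complex.exp (-s * (r y : ℂ)) * ((|(fderivWithin ℝ h Y y).det| : ℝ) : ℂ)

section TwistedWeight

variable {E : Type*} [NormedAddCommGroup E] [NormedSpace ℝ E] {Y : Set E} {α C₁ : ℝ}
  {h : E → E} {r : E → ℝ} {s : ℂ} {ε R S : ℝ}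

lemma abs_det_fderivWithin_sub_le (hY : Convex ℝ Y) (hYu : UniqueDiffOn ℝ Y)
    (hdiam : ∀ x ∈ Y, ∀ y ∈ Y, dist x y ^ α ≤ 1) (hC₁ : 0 ≤ C₁) (hh : ContDiffOn ℝ 1 h Y)
    (hdet : ∀ x ∈ Y, ∀ y ∈ Y, |Real.log (abs (fderivWithin ℝ h Y x).det) -
      Real.log (abs (fderivWithin ℝ h Y y).det)| ≤ C₁ * dist x y ^ α) :
    ∀ x ∈ Y, ∀ y ∈ Y, abs (|(fderivWithin ℝ h Y x).det| - |(fderivWithin ℝ h Y y).det|) ≤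
      |(fderivWithin ℝ h Y y).det| * (C₁ * Real.exp C₁) * dist x y ^ α :=
  hY.isPreconnected.abs_sub_le_of_abs_log_sub_le
    (ContinuousLinearMap.continuous_det.comp_continuousOn
      (hh.continuousOn_fderivWithin hYu le_rfl)).abs (fun _ _ => abs_nonneg _) hC₁ hdiam hdet

lemma abs_det_fderivWithin_le_cbiSup (hY : Convex ℝ Y) (hYu : UniqueDiffOn ℝ Y)
    (hdiam : ∀ x ∈ Y, ∀ y ∈ Y, dist x y ^ α ≤ 1) (hC₁ : 0 ≤ C₁) (hh : ContDiffOn ℝ 1 h Y)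
    (hdet : ∀ x ∈ Y, ∀ y ∈ Y, |Real.log (abs (fderivWithin ℝ h Y x).det) -
      Real.log (abs (fderivWithin ℝ h Y y).det)| ≤ C₁ * dist x y ^ α) {y : E} (hy : y ∈ Y) :
    |(fderivWithin ℝ h Y y).det| ≤ ⨆ y ∈ Y, |(fderivWithin ℝ h Y y).det| := by
  refine le_cbiSup_of_mem (f := fun y => |(fderivWithin ℝ h Y y).det|)
    ⟨|(fderivWithin ℝ h Y y).det| * (1 + C₁ * Real.exp C₁), ?_⟩ hy
  rintro _ ⟨x, hx, rfl⟩
  have hxy := (abs_le.1 (abs_det_fderivWithin_sub_le hY hYu hdiam hC₁ hh hdet x hx y hy)).2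
  have hk : 0 ≤ |(fderivWithin ℝ h Y y).det| * (C₁ * Real.exp C₁) := by positivity
  have := mul_le_of_le_one_right hk (hdiam x hx y hy)
  dsimp only
  linarith

lemma le_cbiSup_of_norm_fderivWithin_le (hY : Convex ℝ Y) (hdiam : ∀ x ∈ Y, ∀ y ∈ Y, dist x y ≤ 1)
    (hr : DifferentiableOn ℝ r Y) (hDr : ∀ y ∈ Y, ‖fderivWithin ℝ r Y y‖ ≤ C₁) {y : E}
    (hy : y ∈ Y) : r y ≤ ⨆ y ∈ Y, r y := by
  refine le_cbiSup_of_mem (f := r) ⟨r y + C₁, ?_⟩ hy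
  rintro _ ⟨x, hx, rfl⟩
  have hxy := hY.dist_image_le_of_norm_fderivWithin_le hr hDr hx hy
  have hC₁ : 0 ≤ C₁ := (norm_nonneg _).trans (hDr y hy)
  rw [Real.dist_eq] at hxy
  nlinarith [le_abs_self (r x - r y), hdiam x hx y hy]

lemma norm_twistedWeight_le (hs : |s.re| ≤ ε) (hr0 : ∀ y ∈ Y, 0 ≤ r y) (hrR : ∀ y ∈ Y, r y ≤ R)
    (hJS : ∀ y ∈ Y, |(fderivWithin ℝ h Y y).det| ≤ S) :
    ∀ y ∈ Y, ‖twistedWeight Y h r s y‖ ≤ Real.exp (ε * R) * S := by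
  intro y hy
  rw [twistedWeight, norm_mul, Complex.norm_real, Real.norm_eq_abs, abs_abs]
  exact mul_le_mul (Complex.norm_exp_neg_mul_ofReal_le hs (hr0 y hy) (hrR y hy)) (hJS y hy)
    (abs_nonneg _) (Real.exp_pos _).le

lemma norm_twistedWeight_sub_le {K : ℝ} (hα0 : 0 < α) (hα1 : α ≤ 1) (hs : |s.re| ≤ ε)
    (hC₁ : 0 ≤ C₁) (hK : 0 ≤ K) (hdiam : ∀ x ∈ Y, ∀ y ∈ Y, dist x y ≤ 1) (hr0 : ∀ y ∈ Y, 0 ≤ r y)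
    (hrR : ∀ y ∈ Y, r y ≤ R) (hrL : ∀ x ∈ Y, ∀ y ∈ Y, |r x - r y| ≤ C₁ * dist x y)
    (hJS : ∀ y ∈ Y, |(fderivWithin ℝ h Y y).det| ≤ S)
    (hJ : ∀ x ∈ Y, ∀ y ∈ Y, abs (|(fderivWithin ℝ h Y x).det| - |(fderivWithin ℝ h Y y).det|) ≤
      |(fderivWithin ℝ h Y y).det| * K * dist x y ^ α) :
    ∀ x ∈ Y, ∀ y ∈ Y, ‖twistedWeight Y h r s x - twistedWeight Y h r s y‖ ≤
      Real.exp (ε * R) * S *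
        ((K + (2 + Real.exp (ε * C₁)) * (1 + ε) * C₁ ^ α) * (1 + |s.im| ^ α)) * dist x y ^ α := by
  intro x hx y hy
  set Jx := |(fderivWithin ℝ h Y x).det|
  set Jy := |(fderivWithin ℝ h Y y).det|
  set Ex := Complex.exp (-s * r x)
  set Ey := Complex.exp (-s * r y)
  set B := |s.im| ^ α
  set D := dist x y ^ α
  set Q := (2 + Real.exp (ε * C₁)) * (1 + ε) * C₁ ^ α
  have hε : 0 ≤ ε := (abs_nonneg _).trans hs
  have hJy : 0 ≤ Jy := abs_nonneg _
  have hJyS : Jy ≤ S := hJS y hy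
  have hQ : 0 ≤ Q := by have := Real.rpow_nonneg hC₁ α; positivity
  have hB : 0 ≤ B := by positivity
  have hEx : ‖Ex‖ ≤ Real.exp (ε * R) :=
    Complex.norm_exp_neg_mul_ofReal_le hs (hr0 x hx) (hrR x hx)
  have hExy : ‖Ex - Ey‖ ≤ Real.exp (ε * R) * (Q * (1 + B) * D) := by
    refine (Complex.norm_exp_neg_mul_sub_le_of_abs_sub_le hα0 hα1 hs hC₁ (hrL x hx y hy)
      dist_nonneg (hdiam x hx y hy)).trans ?_
    gcongr
    exact Complex.norm_exp_neg_mul_ofReal_le hs (hr0 y hy) (hrR y hy)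
  have hsplit : twistedWeight Y h r s x - twistedWeight Y h r s y =
      Ex * ((Jx - Jy : ℝ) : ℂ) + (Ex - Ey) * (Jy : ℂ) := by
    simp only [twistedWeight]; push_cast; ring
  rw [hsplit]
  calc _ ≤ ‖Ex‖ * |Jx - Jy| + ‖Ex - Ey‖ * Jy := by
        refine (norm_add_le _ _).trans_eq ?_
        rw [norm_mul, norm_mul, Complex.norm_real, Complex.norm_real, Real.norm_eq_abs,
          Real.norm_eq_abs, abs_of_nonneg hJy]
    _ ≤ Real.exp (ε * R) * (Jy * K * D) + Real.exp (ε * R) * (Q * (1 + B) * D) * Jy := by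
        gcongr
        exact hJ x hx y hy
    _ = Real.exp (ε * R) * (Jy * (K * D) + Jy * (Q * (1 + B) * D)) := by ring
    _ ≤ Real.exp (ε * R) * (S * (1 + B) * (K * D) + S * (Q * (1 + B) * D)) := by
        have hJS' : Jy ≤ S * (1 + B) := by nlinarith
        gcongr
    _ = _ := by ring

lemma norm_twistedWeight_le_and_sub_le (hα0 : 0 < α) (hα1 : α ≤ 1) (hC₁ : 0 ≤ C₁)
    (hY : Convex ℝ Y) (hYu : UniqueDiffOn ℝ Y) (hdiam : ∀ x ∈ Y, ∀ y ∈ Y, dist x y ≤ 1)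
    (hh : ContDiffOn ℝ 1 h Y)
    (hdet : ∀ x ∈ Y, ∀ y ∈ Y, |Real.log (abs (fderivWithin ℝ h Y x).det) -
      Real.log (abs (fderivWithin ℝ h Y y).det)| ≤ C₁ * dist x y ^ α)
    (hr : ContDiffOn ℝ 1 r Y) (hr0 : ∀ y ∈ Y, 0 ≤ r y)
    (hDr : ∀ y ∈ Y, ‖fderivWithin ℝ r Y y‖ ≤ C₁) (hs : |s.re| ≤ ε) :
    (∀ y ∈ Y, ‖twistedWeight Y h r s y‖ ≤
      Real.exp (ε * ⨆ y ∈ Y, r y) * ⨆ y ∈ Y, |(fderivWithin ℝ h Y y).det|) ∧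
    ∀ x ∈ Y, ∀ y ∈ Y, ‖twistedWeight Y h r s x - twistedWeight Y h r s y‖ ≤
      Real.exp (ε * ⨆ y ∈ Y, r y) * (⨆ y ∈ Y, |(fderivWithin ℝ h Y y).det|) *
        ((C₁ * Real.exp C₁ + (2 + Real.exp (ε * C₁)) * (1 + ε) * C₁ ^ α) * (1 + |s.im| ^ α)) *
          dist x y ^ α := by
  have hdiamα : ∀ x ∈ Y, ∀ y ∈ Y, dist x y ^ α ≤ 1 := fun x hx y hy =>
    Real.rpow_le_one dist_nonneg (hdiam x hx y hy) hα0.le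
  have hrd := hr.differentiableOn one_ne_zero
  have hrR := fun y hy => le_cbiSup_of_norm_fderivWithin_le hY hdiam hrd hDr (y := y) hy
  have hJS := fun y hy => abs_det_fderivWithin_le_cbiSup hY hYu hdiamα hC₁ hh hdet (y := y) hy
  refine ⟨norm_twistedWeight_le hs hr0 hrR hJS, norm_twistedWeight_sub_le hα0 hα1 hs hC₁
    (by positivity) hdiam hr0 hrR (fun x hx y hy => ?_) hJS
    (abs_det_fderivWithin_sub_le hY hYu hdiamα hC₁ hh hdet)⟩
  simpa only [Real.dist_eq] using hY.dist_image_le_of_norm_fderivWithin_le hrd hDr hx hy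

end TwistedWeight

theorem stmt12_general {m : ℕ} {I : Type*}
    (c : EuclideanSpace ℝ (Fin m))
    (Y : Set (EuclideanSpace ℝ (Fin m))) (hY : Y = Metric.ball c (1 / 2))
    (α : ℝ) (hα : α ∈ Set.Ioc (0 : ℝ) 1)
    (C₁ : ℝ) (hC₁ : 1 ≤ C₁)
    (ρ₀ : ℝ) (hρ₀ : ρ₀ ∈ Set.Ioo (0 : ℝ) 1)
    (r₀ : ℝ) (hr₀ : 0 < r₀) (ε₀ : ℝ) (hε₀ : 0 < ε₀)
    (h : I → EuclideanSpace ℝ (Fin m) → EuclideanSpace ℝ (Fin m))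
    (r : I → EuclideanSpace ℝ (Fin m) → ℝ)
    (hmaps : ∀ i, Set.MapsTo (h i) Y Y)
    (hsmooth : ∀ i, ContDiffOn ℝ 1 (h i) Y)
    (hDh : ∀ i, ∀ y ∈ Y, ‖fderivWithin ℝ (h i) Y y‖ ≤ C₁ * ρ₀)
    (hdet : ∀ i, ∀ x ∈ Y, ∀ y ∈ Y,
      |Real.log (abs (fderivWithin ℝ (h i) Y x).det) -
        Real.log (abs (fderivWithin ℝ (h i) Y y).det)| ≤ C₁ * dist x y ^ α)
    (hrsmooth : ∀ i, ContDiffOn ℝ 1 (r i) Y)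
    (hrlb : ∀ i, ∀ y ∈ Y, r₀ ≤ r i y)
    (hDr : ∀ i, ∀ y ∈ Y, ‖fderivWithin ℝ (r i) Y y‖ ≤ C₁)
    (hsum : Summable fun i =>
      Real.exp (ε₀ * ⨆ y ∈ Y, r i y) * ⨆ y ∈ Y, |(fderivWithin ℝ (h i) Y y).det|) :
    ∃ ε ∈ Set.Ioc (0 : ℝ) ε₀, ∃ C > (0 : ℝ),
      ∀ s : ℂ, |s.re| ≤ ε →
      ∀ v : EuclideanSpace ℝ (Fin m) → ℂ, ∀ Vinf Vα : ℝ,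
      (∀ y ∈ Y, ‖v y‖ ≤ Vinf) →
      (∀ x ∈ Y, ∀ y ∈ Y, ‖v x - v y‖ ≤ Vα * dist x y ^ α) →
      (∀ y ∈ Y, Summable fun i =>
        ‖Complex.exp (-s * (r i y : ℂ)) *
          ((|(fderivWithin ℝ (h i) Y y).det| : ℝ) : ℂ) * v (h i y)‖) ∧
      TendstoUniformlyOn
        (fun (t : Finset I) y => ∑ i ∈ t, Complex.exp (-s * (r i y : ℂ)) *
          ((|(fderivWithin ℝ (h i) Y y).det| : ℝ) : ℂ) * v (h i y))
        (transferOp Y h r s v) atTop Y ∧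
      (∀ y ∈ Y, ‖transferOp Y h r s v y‖ ≤
        C * max Vinf (Vα / (1 + |s.im| ^ α))) ∧
      (∀ x ∈ Y, ∀ y ∈ Y,
        ‖transferOp Y h r s v x - transferOp Y h r s v y‖ ≤
          C * max Vinf (Vα / (1 + |s.im| ^ α)) * (1 + |s.im| ^ α) * dist x y ^ α) := by
  obtain ⟨hα0, hα1⟩ := hα
  have hC₁0 : 0 ≤ C₁ := zero_le_one.trans hC₁
  have hc : c ∈ Y := hY ▸ Metric.mem_ball_self (by norm_num)
  have hYc : Convex ℝ Y := hY ▸ convex_ball c _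
  have hYu : UniqueDiffOn ℝ Y := (hY ▸ Metric.isOpen_ball : IsOpen Y).uniqueDiffOn
  have hdiam : ∀ x ∈ Y, ∀ y ∈ Y, dist x y ≤ 1 :=
    hY ▸ fun _ hx _ hy => dist_le_one_of_mem_ball_half hx hy
  have hhL := fun i x (hx : x ∈ Y) y (hy : y ∈ Y) => hYc.dist_image_le_of_norm_fderivWithin_le
    ((hsmooth i).differentiableOn one_ne_zero) (hDh i) hx hy
  set K := C₁ * Real.exp C₁ + (2 + Real.exp (ε₀ * C₁)) * (1 + ε₀) * C₁ ^ α
  set L := (C₁ * ρ₀) ^ α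
  set T := ∑' i, Real.exp (ε₀ * ⨆ y ∈ Y, r i y) * ⨆ y ∈ Y, |(fderivWithin ℝ (h i) Y y).det|
  have hρ : 0 ≤ C₁ * ρ₀ := mul_nonneg hC₁0 hρ₀.1.le
  have hT : 0 ≤ T := tsum_nonneg fun i => mul_nonneg (Real.exp_pos _).le
    (Real.iSup_nonneg fun _ => Real.iSup_nonneg fun _ => abs_nonneg _)
  have hK : 0 ≤ K := by have := Real.rpow_nonneg hC₁0 α; positivity
  have hL : 0 ≤ L := Real.rpow_nonneg hρ α
  refine ⟨ε₀, ⟨hε₀, le_rfl⟩, (T + 1) * (1 + K + L), by positivity,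
    fun s hs v Vinf Vα hv hvH => ?_⟩
  have hweight := fun i => norm_twistedWeight_le_and_sub_le (s := s) hα0 hα1 hC₁0 hYc hYu hdiam
    (hsmooth i) (hdet i) (hrsmooth i) (fun y hy => hr₀.le.trans (hrlb i y hy)) (hDr i) hs
  set B := |s.im| ^ α
  -- `Mv` is the norm `‖v‖_b`.
  set Mv := max Vinf (Vα / (1 + B))
  have hMv : 0 ≤ Mv := ((norm_nonneg _).trans (hv c hc)).trans (le_max_left _ _)
  have hv' : ∀ y ∈ Y, ‖v y‖ ≤ Mv := fun y hy => (hv y hy).trans (le_max_left _ _)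
  have hvH' : ∀ x ∈ Y, ∀ y ∈ Y, ‖v x - v y‖ ≤ Mv * (1 + B) * dist x y ^ α := fun x hx y hy =>
    (hvH x hx y hy).trans (by gcongr; exact (div_le_iff₀ (by positivity)).1 (le_max_right _ _))
  -- `transferOp Y h r s v y` unfolds to `∑' i, twistedWeight Y (h i) (r i) s y * v (h i y)`.
  refine ⟨fun y hy => summable_norm_mul_comp hsum hmaps (fun i => (hweight i).1) hv hy,
    tendstoUniformlyOn_tsum_mul_comp hsum hmaps (fun i => (hweight i).1) hv,
    fun y hy => (norm_tsum_mul_comp_le hsum hmaps (fun i => (hweight i).1) hv' hy).trans ?_,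
    fun x hx y hy => (norm_tsum_mul_comp_sub_le hsum hmaps (fun i => (hweight i).1)
      (fun i => (hweight i).2) hα0.le hρ hhL hv' hvH' (by positivity) hx hy).trans ?_⟩
  · gcongr
    nlinarith
  · calc T * (K * (1 + B) * Mv + Mv * (1 + B) * L) * dist x y ^ α
        = T * (K + L) * Mv * (1 + B) * dist x y ^ α := by ring
      _ ≤ (T + 1) * (1 + K + L) * Mv * (1 + B) * dist x y ^ α := by
        gcongr ?_ * _ * _ * _
        nlinarith

/-- Proposition 3.2 (uniform boundedness): for inverse branches `h_i` and roof
functions `r_i` satisfying conditions (i)-(iv), there are `ε ∈ (0, ε₀]` and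
`C > 0` such that for all `s = σ + ib` with `|σ| ≤ ε` and all bounded α-Hölder
`v`, the series defining `P_s v` converges absolutely and uniformly on `Y`,
and `‖P_s v‖_b ≤ C ‖v‖_b`, where `‖v‖_b = max(|v|_∞, |v|_α/(1+|b|^α))`.
(The norm bound is expressed via arbitrary Hölder data `(Vinf, Vα)` for `v`.) -/
theorem stmt12 {m : ℕ} (hm : 1 ≤ m) {I : Type*} [Countable I]
    (c : EuclideanSpace ℝ (Fin m))
    (Y : Set (EuclideanSpace ℝ (Fin m))) (hY : Y = Metric.ball c (1 / 2))
    (α : ℝ) (hα : α ∈ Set.Ioc (0 : ℝ) 1)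
    (C₁ : ℝ) (hC₁ : 1 ≤ C₁)
    (ρ₀ : ℝ) (hρ₀ : ρ₀ ∈ Set.Ioo (0 : ℝ) 1)
    (r₀ : ℝ) (hr₀ : 0 < r₀) (ε₀ : ℝ) (hε₀ : 0 < ε₀)
    (h : I → EuclideanSpace ℝ (Fin m) → EuclideanSpace ℝ (Fin m))
    (r : I → EuclideanSpace ℝ (Fin m) → ℝ)
    (hinj : ∀ i, Set.InjOn (h i) Y)
    (hmaps : ∀ i, Set.MapsTo (h i) Y Y)
    (hdisj : Pairwise fun i j => Disjoint (h i '' Y) (h j '' Y))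
    (hsmooth : ∀ i, ContDiffOn ℝ 1 (h i) Y)
    (hDh : ∀ i, ∀ y ∈ Y, ‖fderivWithin ℝ (h i) Y y‖ ≤ C₁ * ρ₀)
    (hdet : ∀ i, ∀ x ∈ Y, ∀ y ∈ Y,
      |Real.log (abs (fderivWithin ℝ (h i) Y x).det) -
        Real.log (abs (fderivWithin ℝ (h i) Y y).det)| ≤ C₁ * dist x y ^ α)
    (hrsmooth : ∀ i, ContDiffOn ℝ 1 (r i) Y)
    (hrlb : ∀ i, ∀ y ∈ Y, r₀ ≤ r i y)
    (hDr : ∀ i, ∀ y ∈ Y, ‖fderivWithin ℝ (r i) Y y‖ ≤ C₁)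
    (hsum : Summable fun i =>
      Real.exp (ε₀ * ⨆ y ∈ Y, r i y) * ⨆ y ∈ Y, |(fderivWithin ℝ (h i) Y y).det|) :
    ∃ ε ∈ Set.Ioc (0 : ℝ) ε₀, ∃ C > (0 : ℝ),
      ∀ s : ℂ, |s.re| ≤ ε →
      ∀ v : EuclideanSpace ℝ (Fin m) → ℂ, ∀ Vinf Vα : ℝ,
      (∀ y ∈ Y, ‖v y‖ ≤ Vinf) →
      (∀ x ∈ Y, ∀ y ∈ Y, ‖v x - v y‖ ≤ Vα * dist x y ^ α) →
      (∀ y ∈ Y, Summable fun i =>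
        ‖Complex.exp (-s * (r i y : ℂ)) *
          ((|(fderivWithin ℝ (h i) Y y).det| : ℝ) : ℂ) * v (h i y)‖) ∧
      TendstoUniformlyOn
        (fun (t : Finset I) y => ∑ i ∈ t, Complex.exp (-s * (r i y : ℂ)) *
          ((|(fderivWithin ℝ (h i) Y y).det| : ℝ) : ℂ) * v (h i y))
        (transferOp Y h r s v) atTop Y ∧
      (∀ y ∈ Y, ‖transferOp Y h r s v y‖ ≤
        C * max Vinf (Vα / (1 + |s.im| ^ α))) ∧
      (∀ x ∈ Y, ∀ y ∈ Y,
        ‖transferOp Y h r s v x - transferOp Y h r s v y‖ ≤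
          C * max Vinf (Vα / (1 + |s.im| ^ α)) * (1 + |s.im| ^ α) * dist x y ^ α) :=
  stmt12_general c Y hY α hα C₁ hC₁ ρ₀ hρ₀ r₀ hr₀ ε₀ hε₀ h r hmaps hsmooth hDh hdet hrsmooth hrlb
    hDr hsum
end
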